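/- arXiv:2507.23375 — 12 statements merged into one kernel-verified Lean document; each statement's English description precedes it below -/
import Mathlib

section
/- For any family F of subsets of [n] and any subset T of [n], the trace of the squashed family S_v(F) on T has size at most the size of the trace of F on T, i.e., |S_v(F)|_T| ≤ |F|_T|. -/
/-- The squash operation `S_v` on a family of subsets of `[n]`. -/
def squash {n : ℕ} (𝓕 : Finset (Finset (Fin n))) (v : Fin n) : Finset (Finset (Fin n)) :=
  𝓕.image (fun A => if v ∈ A ∧ A.erase v ∉ 𝓕 then A.erase v else A)

lemma squash_card {n : ℕ} (𝓕 : Finset (Finset (Fin n))) (v : Fin n) :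
    (squash 𝓕 v).card = 𝓕.card := by
  apply Finset.card_image_of_injOn
  intro A hA B hB h
  dsimp only at h
  split_ifs at h with h1 h2 h2
  · have : A = B := by
      rw [← Finset.insert_erase h1.1, h, Finset.insert_erase h2.1]
    exact this
  · exact absurd (h ▸ hB) h1.2
  · exact absurd (h ▸ hA) h2.2
  · exact h

lemma trace_squash_subset {n : ℕ} (𝓕 : Finset (Finset (Fin n))) (v : Fin n)
    (T : Finset (Fin n)) :
    ((squash 𝓕 v).image (· ∩ T)) ⊆ squash (𝓕.image (· ∩ T)) v := by
  intro x hx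
  simp only [squash, Finset.mem_image] at hx
  obtain ⟨_, ⟨A, hA, rfl⟩, rfl⟩ := hx
  set G := 𝓕.image (· ∩ T) with hG
  have key : ∀ B ∈ G, (if v ∈ B ∧ B.erase v ∉ G then B.erase v else B) ∈ squash G v :=
    fun B hB => Finset.mem_image_of_mem _ hB
  have hBT : A ∩ T ∈ G := Finset.mem_image_of_mem _ hA
  by_cases hc : v ∈ A ∧ A.erase v ∉ 𝓕
  · rw [if_pos hc]
    have hET : (A.erase v) ∩ T = (A ∩ T).erase v := by
      ext x; simp only [Finset.mem_erase, Finset.mem_inter]; tauto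
    rw [hET]
    by_cases hE : (A ∩ T).erase v ∈ G
    · have h2 := key _ hE
      rwa [if_neg (by simp)] at h2
    · by_cases hv : v ∈ A ∩ T
      · have h2 := key _ hBT
        rwa [if_pos ⟨hv, hE⟩] at h2
      · rw [Finset.erase_eq_of_notMem hv] at hE ⊢
        exact absurd hBT hE
  · rw [if_neg hc]
    by_cases hv : v ∈ A ∩ T
    · have hvA : v ∈ A := (Finset.mem_inter.mp hv).1
      have hAe : A.erase v ∈ 𝓕 := by tauto
      have hE : (A ∩ T).erase v ∈ G := by
        refine Finset.mem_image.mpr ⟨A.erase v, hAe, ?_⟩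
        ext x; simp only [Finset.mem_erase, Finset.mem_inter]; tauto
      have h2 := key _ hBT
      rwa [if_neg (fun h => h.2 hE)] at h2
    · have h2 := key _ hBT
      rwa [if_neg (fun h => hv h.1)] at h2

theorem squash_trace_card_le {n : ℕ} (𝓕 : Finset (Finset (Fin n))) (v : Fin n)
    (T : Finset (Fin n)) :
    ((squash 𝓕 v).image (· ∩ T)).card ≤ (𝓕.image (· ∩ T)).card := by
  calc ((squash 𝓕 v).image (· ∩ T)).card
      ≤ (squash (𝓕.image (· ∩ T)) v).card :=
        Finset.card_le_card (trace_squash_subset 𝓕 v T)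
    _ = (𝓕.image (· ∩ T)).card := squash_card _ _
end

section
/- The arrow relation (n, m) → (a, b) holds if and only if every hereditary family F ⊆ 2^[n] with |F| = m satisfies F → (a, b); that is, to verify that every family of size at least m admits a trace of size at least b on some a-element set, it suffices to check hereditary families of size exactly m. -/
open Finset
open scoped FinsetFamily

variable {α : Type*} [DecidableEq α]

/-- A family closed under removing one element is hereditary. -/
lemma hered_of_erase {𝒜 : Finset (Finset α)} (h : ∀ s ∈ 𝒜, ∀ x, s.erase x ∈ 𝒜) :
    ∀ A ∈ 𝒜, ∀ B ⊆ A, B ∈ 𝒜 := by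
  suffices H : ∀ k : ℕ, ∀ A ∈ 𝒜, A.card ≤ k → ∀ B ⊆ A, B ∈ 𝒜 by
    intro A hA B hB; exact H A.card A hA le_rfl B hB
  intro k
  induction k with
  | zero =>
    intro A hA hc B hB
    rw [Nat.le_zero, card_eq_zero] at hc
    subst hc
    rwa [subset_empty.1 hB]
  | succ k ih =>
    intro A hA hc B hB
    rcases eq_or_ne B A with rfl | hne
    · exact hA
    · obtain ⟨x, hxA, hxB⟩ := exists_of_ssubset (lt_of_le_of_ne hB hne)
      refine ih (A.erase x) (h A hA x) ?_ B (subset_erase.2 ⟨hB, hxB⟩)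
      have := card_erase_of_mem hxA
      omega

/-- The sum of sizes strictly decreases under a nontrivial down-compression. -/
lemma msr_compression_lt {𝒜 : Finset (Finset α)} {a : α} {s₀ : Finset α}
    (hs₀ : s₀ ∈ 𝒜) (ha : a ∈ s₀) (hne : s₀.erase a ∉ 𝒜) :
    ∑ s ∈ 𝓓 a 𝒜, s.card < ∑ s ∈ 𝒜, s.card := by
  have key : (filter (fun s => s ∉ 𝒜) (𝒜.image fun s => erase s a))
      = (filter (fun s => erase s a ∉ 𝒜) 𝒜).image (fun s => erase s a) := by
    ext t
    simp only [mem_filter, mem_image]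
    constructor
    · rintro ⟨⟨u, hu, rfl⟩, ht⟩
      exact ⟨u, ⟨hu, ht⟩, rfl⟩
    · rintro ⟨u, ⟨hu, hu'⟩, rfl⟩
      exact ⟨⟨u, hu, rfl⟩, hu'⟩
  have hmem : ∀ s ∈ filter (fun s => erase s a ∉ 𝒜) 𝒜, a ∈ s := by
    intro s hs
    rw [mem_filter] at hs
    by_contra hx
    exact hs.2 (by rw [erase_eq_of_notMem hx]; exact hs.1)
  rw [Down.compression, sum_disjUnion, key,
    sum_image (fun s hs t ht h => erase_injOn' a (hmem s hs) (hmem t ht) h)]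
  have hsplit := sum_filter_add_sum_filter_not 𝒜 (fun s => erase s a ∈ 𝒜) (fun s => s.card)
  rw [← hsplit]
  refine Nat.add_lt_add_left ?_ _
  refine sum_lt_sum (fun s hs => card_le_card (erase_subset a s)) ⟨s₀, ?_, ?_⟩
  · simpa [mem_filter] using ⟨hs₀, hne⟩
  · exact card_lt_card (erase_ssubset ha)

/-- Down-compression does not increase the size of any trace. -/
lemma trace_compression_le (a : α) (T : Finset α) (𝒜 : Finset (Finset α)) :
    ((𝓓 a 𝒜).image (· ∩ T)).card ≤ (𝒜.image (· ∩ T)).card := by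
  by_cases haT : a ∈ T
  · calc ((𝓓 a 𝒜).image (· ∩ T)).card
        ≤ (𝓓 a (𝒜.image (· ∩ T))).card := by
          refine card_le_card ?_
          intro t ht
          simp only [mem_image] at ht
          obtain ⟨s, hs, rfl⟩ := ht
          rw [Down.mem_compression] at hs ⊢
          rcases hs with ⟨hs, hes⟩ | ⟨hs, his⟩
          · refine Or.inl ⟨mem_image_of_mem _ hs, ?_⟩
            have : (s ∩ T).erase a = s.erase a ∩ T := by
              rw [erase_inter]
            rw [this]
            exact mem_image_of_mem _ hes
          · have has : a ∉ s := fun h => hs (by rwa [insert_eq_of_mem h] at his)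
            have hins : insert a (s ∩ T) = insert a s ∩ T := by
              rw [insert_inter_of_mem haT]
            by_cases h : s ∩ T ∈ 𝒜.image (· ∩ T)
            · refine Or.inl ⟨h, ?_⟩
              rwa [erase_eq_of_notMem (fun hc => has (mem_inter.1 hc).1)]
            · exact Or.inr ⟨h, by rw [hins]; exact mem_image_of_mem _ his⟩
      _ = (𝒜.image (· ∩ T)).card := Down.card_compression _ _
  · refine card_le_card ?_
    intro t ht
    simp only [mem_image] at ht ⊢
    obtain ⟨s, hs, rfl⟩ := ht
    rw [Down.mem_compression] at hs
    rcases hs with ⟨hs, -⟩ | ⟨-, his⟩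
    · exact ⟨s, hs, rfl⟩
    · exact ⟨insert a s, his, by rw [insert_inter_of_notMem haT]⟩

/-- Every family can be compressed to an erase-closed family of the same size whose
traces are no larger. -/
lemma exists_compressed (𝒜 : Finset (Finset α)) :
    ∃ ℬ : Finset (Finset α), ℬ.card = 𝒜.card ∧ (∀ s ∈ ℬ, ∀ x, s.erase x ∈ ℬ) ∧
      ∀ T, (ℬ.image (· ∩ T)).card ≤ (𝒜.image (· ∩ T)).card := by
  suffices H : ∀ N : ℕ, ∀ 𝒜 : Finset (Finset α), (∑ s ∈ 𝒜, s.card) ≤ N →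
      ∃ ℬ : Finset (Finset α), ℬ.card = 𝒜.card ∧ (∀ s ∈ ℬ, ∀ x, s.erase x ∈ ℬ) ∧
        ∀ T, (ℬ.image (· ∩ T)).card ≤ (𝒜.image (· ∩ T)).card from
    H _ 𝒜 le_rfl
  intro N
  induction N using Nat.strong_induction_on with
  | _ N ih =>
    intro 𝒜 hle
    by_cases h : ∀ s ∈ 𝒜, ∀ x, s.erase x ∈ 𝒜
    · exact ⟨𝒜, rfl, h, fun T => le_rfl⟩
    · push_neg at h
      obtain ⟨s₀, hs₀, x, hx⟩ := h
      have hax : x ∈ s₀ := by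
        by_contra hc
        exact hx (by rwa [erase_eq_of_notMem hc])
      have hlt : (∑ s ∈ 𝓓 x 𝒜, s.card) < N :=
        lt_of_lt_of_le (msr_compression_lt hs₀ hax hx) hle
      obtain ⟨ℬ, hcard, hher, htr⟩ := ih _ hlt (𝓓 x 𝒜) le_rfl
      exact ⟨ℬ, hcard.trans (Down.card_compression _ _), hher,
        fun T => (htr T).trans (trace_compression_le x T 𝒜)⟩

/-- A hereditary family of size at least `m` contains a hereditary subfamily of size `m`. -/
lemma exists_hered_subfamily :
    ∀ 𝓗 : Finset (Finset α), (∀ A ∈ 𝓗, ∀ B ⊆ A, B ∈ 𝓗) → ∀ m ≤ 𝓗.card,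
      ∃ 𝓖 ⊆ 𝓗, (∀ A ∈ 𝓖, ∀ B ⊆ A, B ∈ 𝓖) ∧ 𝓖.card = m := by
  suffices H : ∀ k : ℕ, ∀ 𝓗 : Finset (Finset α), 𝓗.card ≤ k →
      (∀ A ∈ 𝓗, ∀ B ⊆ A, B ∈ 𝓗) → ∀ m ≤ 𝓗.card,
      ∃ 𝓖 ⊆ 𝓗, (∀ A ∈ 𝓖, ∀ B ⊆ A, B ∈ 𝓖) ∧ 𝓖.card = m from
    fun 𝓗 h m hm => H 𝓗.card 𝓗 le_rfl h m hm
  intro k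
  induction k with
  | zero =>
    intro 𝓗 hk h m hm
    exact ⟨𝓗, Subset.rfl, h, by omega⟩
  | succ k ih =>
    intro 𝓗 hk h m hm
    rcases eq_or_lt_of_le hm with heq | hlt
    · exact ⟨𝓗, Subset.rfl, h, heq.symm⟩
    · have hne : 𝓗.Nonempty := card_pos.1 (by omega)
      obtain ⟨s, hs, hmax⟩ := exists_max_image 𝓗 card hne
      have hher : ∀ A ∈ 𝓗.erase s, ∀ B ⊆ A, B ∈ 𝓗.erase s := by
        intro A hA B hB
        rw [mem_erase] at hA ⊢
        refine ⟨?_, h A hA.2 B hB⟩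
        rintro rfl
        exact hA.1 (Finset.eq_of_subset_of_card_le hB (hmax A hA.2)).symm
      have hcard : (𝓗.erase s).card = 𝓗.card - 1 := card_erase_of_mem hs
      obtain ⟨𝓖, hsub, hG, hGm⟩ := ih (𝓗.erase s) (by omega) hher m (by omega)
      exact ⟨𝓖, hsub.trans (erase_subset _ _), hG, hGm⟩

/-- Frankl's lemma: the arrow relation `(n, m) → (a, b)` holds iff every hereditary
family of size exactly `m` admits a trace of size at least `b` on some `a`-set. -/
theorem arrow_iff_hereditary (n m a b : ℕ) :
    (∀ 𝓕 : Finset (Finset (Fin n)), m ≤ 𝓕.card →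
      ∃ T : Finset (Fin n), T.card = a ∧ b ≤ (𝓕.image (· ∩ T)).card) ↔
    (∀ 𝓕 : Finset (Finset (Fin n)), (∀ A ∈ 𝓕, ∀ B ⊆ A, B ∈ 𝓕) → 𝓕.card = m →
      ∃ T : Finset (Fin n), T.card = a ∧ b ≤ (𝓕.image (· ∩ T)).card) := by
  constructor
  · intro H 𝓕 _ hcard
    exact H 𝓕 hcard.ge
  · intro H 𝓕 hm
    obtain ⟨ℬ, hcardB, herB, htrB⟩ := exists_compressed 𝓕
    have hBher : ∀ A ∈ ℬ, ∀ B ⊆ A, B ∈ ℬ := hered_of_erase herB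
    obtain ⟨𝓖, hsub, hGher, hGcard⟩ :=
      exists_hered_subfamily ℬ hBher m (by omega)
    obtain ⟨T, hT, hb⟩ := H 𝓖 hGher hGcard
    refine ⟨T, hT, hb.trans ?_⟩
    exact (card_le_card (image_subset_image hsub)).trans (htrB T)
end

section
/- (Sauer-Shelah Lemma) For n ≥ k ≥ 1, every family F ⊆ 2^[n] with |F| ≥ 1 + Σ_{i=0}^{k-1} C(n,i) shatters some k-element subset T ⊆ [n], i.e., F|_T = 2^T. -/
/-- The Sauer–Shelah lemma. -/
theorem sauer_shelah (n k : ℕ) (hk : 1 ≤ k) (hkn : k ≤ n)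
    (𝓕 : Finset (Finset (Fin n)))
    (h : 1 + ∑ i ∈ Finset.range k, n.choose i ≤ 𝓕.card) :
    ∃ T : Finset (Fin n), T.card = k ∧ 𝓕.image (· ∩ T) = T.powerset := by
  by_contra hT
  push_neg at hT
  -- every shattered set has card < k
  have hsmall : ∀ s ∈ 𝓕.shatterer, s.card < k := by
    intro s hs
    rw [Finset.mem_shatterer] at hs
    by_contra hlt
    push_neg at hlt
    obtain ⟨t, hts, htcard⟩ := Finset.exists_subset_card_eq hlt
    have hsh : 𝓕.Shatters t := hs.mono_right hts
    rw [Finset.shatters_iff] at hsh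
    refine hT t htcard ?_
    simpa only [Finset.inter_comm] using hsh
  have hsub : 𝓕.shatterer ⊆ (Finset.range k).biUnion
      (fun i ↦ Finset.powersetCard i (Finset.univ : Finset (Fin n))) := by
    intro s hs
    simp only [Finset.mem_biUnion, Finset.mem_range, Finset.mem_powersetCard]
    exact ⟨s.card, hsmall s hs, Finset.subset_univ s, rfl⟩
  have hcard := (Finset.card_le_card hsub).trans (Finset.card_biUnion_le)
  simp only [Finset.card_powersetCard, Finset.card_univ, Fintype.card_fin] at hcard
  have := 𝓕.card_le_card_shatterer
  omega
end

section
/- (Pajor's inequality) For any family F ⊆ 2^[n], the number of subsets of [n] shattered by F is at least |F|. -/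
/-- Pajor's inequality: a family shatters at least `|𝓕|` sets. -/
theorem pajor (n : ℕ) (𝓕 : Finset (Finset (Fin n))) :
    𝓕.card ≤
      ((Finset.univ : Finset (Finset (Fin n))).filter
        (fun T => 𝓕.image (· ∩ T) = T.powerset)).card := by
  have key : (Finset.univ.filter
      (fun T => 𝓕.image (· ∩ T) = T.powerset)) = 𝓕.shatterer := by
    ext T
    simp only [Finset.mem_filter, Finset.mem_univ, true_and, Finset.mem_shatterer]
    constructor
    · intro h t ht
      have : t ∈ 𝓕.image (· ∩ T) := h ▸ Finset.mem_powerset.2 ht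
      obtain ⟨u, hu, hut⟩ := Finset.mem_image.1 this
      exact ⟨u, hu, by rw [Finset.inter_comm]; exact hut⟩
    · intro h
      ext t
      simp only [Finset.mem_image, Finset.mem_powerset]
      constructor
      · rintro ⟨u, _, rfl⟩; exact Finset.inter_subset_right
      · intro ht
        obtain ⟨u, hu, hut⟩ := h ht
        exact ⟨u, hu, by rw [Finset.inter_comm]; exact hut⟩
  rw [key]
  exact Finset.card_le_card_shatterer 𝓕
end

section
/- (Reverse Sauer inequality) For any family F ⊆ 2^[n], the number of sets strongly traced by F is at most |F|. -/
/-- `𝓕` strongly traces `T` if there is a support `S` disjoint from `T` with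
`{A ∪ S : A ⊆ T} ⊆ 𝓕`. -/
def StronglyTraces {n : ℕ} (𝓕 : Finset (Finset (Fin n))) (T : Finset (Fin n)) : Prop :=
  ∃ S : Finset (Fin n), S ∩ T = ∅ ∧ ∀ A ∈ T.powerset, A ∪ S ∈ 𝓕

instance {n : ℕ} (𝓕 : Finset (Finset (Fin n))) (T : Finset (Fin n)) :
    Decidable (StronglyTraces 𝓕 T) := by unfold StronglyTraces; infer_instance

/-!
Split `𝒜` along an element `a` into `𝒜₀ = {A ∈ 𝒜 | a ∉ A}` and `𝒜₁ = {A \ {a} | a ∈ A ∈ 𝒜}`.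
A strongly shattered set `T ∌ a` is strongly shattered by `𝒜₀` or by `𝒜₁` (according to whether
its support contains `a`), while for a strongly shattered `T ∋ a` the set `T \ {a}` is strongly
shattered by both. Hence `|str 𝒜| ≤ |str 𝒜₀ ∪ str 𝒜₁| + |str 𝒜₀ ∩ str 𝒜₁| = |str 𝒜₀| + |str 𝒜₁|`,
and induction on `𝒜` gives `|str 𝒜| ≤ |𝒜₀| + |𝒜₁| = |𝒜|`.
-/

namespace Finset

variable {α : Type*} [DecidableEq α] {𝒜 : Finset (Finset α)} {t : Finset α} {a : α}

def StronglyShatters (𝒜 : Finset (Finset α)) (t : Finset α) : Prop :=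
  ∃ s, Disjoint s t ∧ ∀ ⦃u⦄, u ⊆ t → u ∪ s ∈ 𝒜

lemma StronglyShatters.exists_superset (h : 𝒜.StronglyShatters t) : ∃ u ∈ 𝒜, t ⊆ u :=
  let ⟨s, _, hs⟩ := h
  ⟨t ∪ s, hs subset_rfl, subset_union_left⟩

lemma StronglyShatters.nonMemberSubfamily_or_memberSubfamily (h : 𝒜.StronglyShatters t)
    (ha : a ∉ t) :
    (𝒜.nonMemberSubfamily a).StronglyShatters t ∨ (𝒜.memberSubfamily a).StronglyShatters t := by
  obtain ⟨s, hst, hs⟩ := h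
  by_cases has : a ∈ s
  · refine .inr ⟨s.erase a, disjoint_of_subset_left (erase_subset a s) hst, fun u hu ↦ ?_⟩
    have hau : a ∉ u := fun h ↦ ha (hu h)
    rw [mem_memberSubfamily, ← union_insert, insert_erase has]
    exact ⟨hs hu, notMem_union.2 ⟨hau, notMem_erase a s⟩⟩
  · refine .inl ⟨s, hst, fun u hu ↦ ?_⟩
    have hau : a ∉ u := fun h ↦ ha (hu h)
    exact mem_nonMemberSubfamily.2 ⟨hs hu, notMem_union.2 ⟨hau, has⟩⟩

lemma StronglyShatters.erase_nonMemberSubfamily (h : 𝒜.StronglyShatters t) (ha : a ∈ t) :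
    (𝒜.nonMemberSubfamily a).StronglyShatters (t.erase a) := by
  obtain ⟨s, hst, hs⟩ := h
  have has : a ∉ s := disjoint_right.1 hst ha
  refine ⟨s, disjoint_of_subset_right (erase_subset a t) hst, fun u hu ↦ ?_⟩
  have hau : a ∉ u := fun h ↦ notMem_erase a t (hu h)
  exact mem_nonMemberSubfamily.2 ⟨hs (hu.trans (erase_subset a t)), notMem_union.2 ⟨hau, has⟩⟩

lemma StronglyShatters.erase_memberSubfamily (h : 𝒜.StronglyShatters t) (ha : a ∈ t) :
    (𝒜.memberSubfamily a).StronglyShatters (t.erase a) := by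
  obtain ⟨s, hst, hs⟩ := h
  have has : a ∉ s := disjoint_right.1 hst ha
  refine ⟨s, disjoint_of_subset_right (erase_subset a t) hst, fun u hu ↦ ?_⟩
  have hau : a ∉ u := fun h ↦ notMem_erase a t (hu h)
  rw [mem_memberSubfamily, ← insert_union]
  exact ⟨hs (insert_subset ha (hu.trans (erase_subset a t))), notMem_union.2 ⟨hau, has⟩⟩

open scoped Classical in
noncomputable def strongShatterer (𝒜 : Finset (Finset α)) : Finset (Finset α) :=
  {t ∈ 𝒜.biUnion powerset | 𝒜.StronglyShatters t}

@[simp] lemma mem_strongShatterer : t ∈ 𝒜.strongShatterer ↔ 𝒜.StronglyShatters t := by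
  classical
  simp only [strongShatterer, mem_filter, mem_biUnion, mem_powerset, and_iff_right_iff_imp]
  exact StronglyShatters.exists_superset

lemma strongShatterer_subset_biUnion_powerset (𝒜 : Finset (Finset α)) :
    𝒜.strongShatterer ⊆ 𝒜.biUnion powerset := by
  classical
  exact filter_subset _ _

lemma card_strongShatterer_le (𝒜 : Finset (Finset α)) : #𝒜.strongShatterer ≤ #𝒜 := by
  refine memberFamily_induction_on 𝒜 ?_ ?_ fun a 𝒜 ih₀ ih₁ ↦ ?_
  · simpa using strongShatterer_subset_biUnion_powerset (∅ : Finset (Finset α))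
  · simpa using card_le_card (strongShatterer_subset_biUnion_powerset {(∅ : Finset α)})
  set 𝒮₀ := (𝒜.nonMemberSubfamily a).strongShatterer
  set 𝒮₁ := (𝒜.memberSubfamily a).strongShatterer
  have h_notMem : {t ∈ 𝒜.strongShatterer | a ∉ t} ⊆ 𝒮₀ ∪ 𝒮₁ := by
    intro t ht
    rw [mem_filter, mem_strongShatterer] at ht
    simpa [𝒮₀, 𝒮₁] using ht.1.nonMemberSubfamily_or_memberSubfamily ht.2
  have h_mem : #{t ∈ 𝒜.strongShatterer | a ∈ t} ≤ #(𝒮₀ ∩ 𝒮₁) := by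
    refine card_le_card_of_injOn (erase · a) (fun t ht ↦ ?_)
      ((erase_injOn' a).mono fun t ht ↦ (mem_filter.1 ht).2)
    rw [mem_coe, mem_filter, mem_strongShatterer] at ht
    simpa [𝒮₀, 𝒮₁] using
      ⟨ht.1.erase_nonMemberSubfamily ht.2, ht.1.erase_memberSubfamily ht.2⟩
  calc #𝒜.strongShatterer
      = #{t ∈ 𝒜.strongShatterer | a ∉ t} + #{t ∈ 𝒜.strongShatterer | a ∈ t} := by
        rw [add_comm, card_filter_add_card_filter_not]
    _ ≤ #(𝒮₀ ∪ 𝒮₁) + #(𝒮₀ ∩ 𝒮₁) := add_le_add (card_le_card h_notMem) h_mem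
    _ = #𝒮₀ + #𝒮₁ := card_union_add_card_inter 𝒮₀ 𝒮₁
    _ ≤ #(𝒜.nonMemberSubfamily a) + #(𝒜.memberSubfamily a) := add_le_add ih₀ ih₁
    _ = #𝒜 := by rw [add_comm, card_memberSubfamily_add_card_nonMemberSubfamily]

end Finset

lemma stronglyTraces_iff {n : ℕ} {𝓕 : Finset (Finset (Fin n))} {T : Finset (Fin n)} :
    StronglyTraces 𝓕 T ↔ 𝓕.StronglyShatters T := by
  simp only [StronglyTraces, Finset.StronglyShatters, Finset.disjoint_iff_inter_eq_empty,
    Finset.mem_powerset]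

/-- The reverse Sauer inequality: `𝓕` strongly traces at most `|𝓕|` sets. -/
theorem reverse_sauer (n : ℕ) (𝓕 : Finset (Finset (Fin n))) :
    ((Finset.univ : Finset (Finset (Fin n))).filter (fun T => StronglyTraces 𝓕 T)).card
      ≤ 𝓕.card := by
  refine le_trans (Finset.card_le_card fun T hT ↦ ?_) (Finset.card_strongShatterer_le 𝓕)
  rw [Finset.mem_filter, stronglyTraces_iff] at hT
  exact Finset.mem_strongShatterer.2 hT.2
end

section
/- For any family F ⊆ 2^[n], the subsets of [n] not shattered by F are exactly the complements of the sets strongly traced by the complementary family 2^[n] \ F; that is, 2^[n] \ tr(F) = {[n] \ T : T ∈ str(2^[n] \ F)}. -/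
/-- The sets not shattered by `𝓕` are exactly the complements of the sets strongly
traced by the complementary family `2^[n] \ 𝓕`. -/
theorem compl_shattered_eq_strongly_traced (n : ℕ) (𝓕 : Finset (Finset (Fin n))) :
    (Finset.univ : Finset (Finset (Fin n))) \
        ((Finset.univ : Finset (Finset (Fin n))).filter
          (fun T => 𝓕.image (· ∩ T) = T.powerset)) =
      (((Finset.univ : Finset (Finset (Fin n))).filter
          (fun T => StronglyTraces ((Finset.univ : Finset (Finset (Fin n))) \ 𝓕) T)).image
        (fun T => Finset.univ \ T)) := by
  ext T
  simp only [Finset.mem_sdiff, Finset.mem_filter, Finset.mem_univ, true_and, Finset.mem_image]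
  constructor
  · intro hne
    have hsub : 𝓕.image (· ∩ T) ⊆ T.powerset := by
      intro S hS
      simp only [Finset.mem_image] at hS
      obtain ⟨F, _, rfl⟩ := hS
      exact Finset.mem_powerset.2 Finset.inter_subset_right
    obtain ⟨S, hST, hSnot⟩ : ∃ S ∈ T.powerset, S ∉ 𝓕.image (· ∩ T) := by
      by_contra h
      push_neg at h
      exact hne (Finset.Subset.antisymm hsub h)
    have hSsub : S ⊆ T := Finset.mem_powerset.1 hST
    refine ⟨Finset.univ \ T, ⟨S, ?_, ?_⟩, by simp⟩
    · ext x
      simp only [Finset.mem_inter, Finset.mem_sdiff, Finset.mem_univ, true_and,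
        Finset.notMem_empty, iff_false]
      rintro ⟨hxS, hxT⟩
      exact hxT (hSsub hxS)
    · intro A hA
      simp only [Finset.mem_powerset] at hA
      simp only [Finset.mem_sdiff, Finset.mem_univ, true_and]
      intro hmem
      apply hSnot
      refine Finset.mem_image.2 ⟨A ∪ S, hmem, ?_⟩
      ext x
      simp only [Finset.union_inter_distrib_right, Finset.mem_union, Finset.mem_inter]
      constructor
      · rintro (⟨hxA, hxT⟩ | ⟨hxS, _⟩)
        · exact absurd hxT (by have := hA hxA; simp at this; exact this)
        · exact hxS
      · exact fun hxS => Or.inr ⟨hxS, hSsub hxS⟩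
  · rintro ⟨U, ⟨S, hdis, hall⟩, rfl⟩
    intro heq
    have hSsub : S ⊆ Finset.univ \ U := by
      intro x hx
      simp only [Finset.mem_sdiff, Finset.mem_univ, true_and]
      intro hxU
      have : x ∈ S ∩ U := Finset.mem_inter.2 ⟨hx, hxU⟩
      simp [hdis] at this
    have hSmem : S ∈ 𝓕.image (· ∩ (Finset.univ \ U)) := by
      rw [heq]; exact Finset.mem_powerset.2 hSsub
    obtain ⟨F, hF, hFS⟩ := Finset.mem_image.1 hSmem
    have hA : F ∩ U ∈ U.powerset := Finset.mem_powerset.2 Finset.inter_subset_right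
    have := hall _ hA
    simp only [Finset.mem_sdiff, Finset.mem_univ, true_and] at this
    apply this
    have : F ∩ U ∪ S = F := by
      rw [← hFS]
      ext x
      simp only [Finset.mem_union, Finset.mem_inter, Finset.mem_sdiff, Finset.mem_univ, true_and]
      by_cases hx : x ∈ U <;> simp [hx]
    rwa [this]
end

section
/- (Frankl 1983) For every n ≥ 1, every family F ⊆ 2^[n] with |F| ≥ ⌊n²/4⌋ + n + 2 admits a 3-element set T ⊆ [n] with |F|_T| ≥ 7; moreover this bound is tight, i.e., there is a family of size ⌊n²/4⌋ + n + 1 whose trace on every 3-element set has size at most 6. -/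
/-!
Down-compressions `𝓓 a` keep the size of a family and do not increase any of its traces, and
they strictly decrease `∑ #s` until the family is a lower set; so it suffices to bound lower
sets `𝒜` all of whose traces on 3-sets have at most 6 elements. In such an `𝒜` every member
has fewer than 3 elements and the 2-element members form a triangle-free graph: otherwise some
3-set would have all 7 of its proper subsets in `𝒜`, hence as traces. So `𝒜` consists of the
cliques with fewer than 3 vertices of a triangle-free graph, of which there are at most
`1 + n + ⌊n²/4⌋` by Mantel's theorem. The same family built from the complete balanced
bipartite graph `turanGraph n 2` has exactly this size, and its trace on a 3-set `T` omits `T`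
and a non-edge inside `T`.
-/

open Finset FinsetFamily

namespace Finset

variable {α : Type*} [DecidableEq α] {𝒜 : Finset (Finset α)} {s T : Finset α} {a : α}

theorem two_pow_card_sub_one_le_card_image_inter (h : ∀ S ⊂ T, S ∈ 𝒜) :
    2 ^ #T - 1 ≤ #(𝒜.image (· ∩ T)) := by
  have hsub : T.ssubsets ⊆ 𝒜.image (· ∩ T) := fun S hS ↦
    mem_image.2 ⟨S, h S (mem_ssubsets.1 hS), inter_eq_left.2 (mem_ssubsets.1 hS).subset⟩
  calc 2 ^ #T - 1 = #T.ssubsets := by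
        rw [ssubsets, card_erase_of_mem (mem_powerset_self T), card_powerset]
    _ ≤ _ := card_le_card hsub

theorem card_image_inter_compression_le (a : α) (𝒜 : Finset (Finset α)) (T : Finset α) :
    #((𝓓 a 𝒜).image (· ∩ T)) ≤ #(𝒜.image (· ∩ T)) := by
  by_cases haT : a ∈ T
  -- For `a ∈ T`, `· ∩ T` commutes with `erase a` and `insert a`.
  · suffices (𝓓 a 𝒜).image (· ∩ T) ⊆ 𝓓 a (𝒜.image (· ∩ T)) from
      (card_le_card this).trans (Down.card_compression _ _).le
    simp only [subset_iff, mem_image, forall_exists_index, and_imp]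
    rintro _ s hs rfl
    rcases Down.mem_compression.1 hs with ⟨hs, hse⟩ | ⟨hs, hins⟩
    · refine Down.mem_compression.2 (Or.inl ⟨mem_image_of_mem _ hs, ?_⟩)
      rw [← erase_inter]
      exact mem_image_of_mem _ hse
    · have hinsT : insert a (s ∩ T) ∈ 𝒜.image (· ∩ T) := by
        rw [← insert_inter_of_mem haT]
        exact mem_image_of_mem _ hins
      by_cases hmem : s ∩ T ∈ 𝒜.image (· ∩ T)
      · have has : a ∉ s ∩ T := fun h ↦
          hs (by rwa [insert_eq_of_mem (mem_inter.1 h).1] at hins)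
        exact Down.mem_compression.2 (Or.inl ⟨hmem, by rwa [erase_eq_of_notMem has]⟩)
      · exact Down.mem_compression.2 (Or.inr ⟨hmem, hinsT⟩)
  · suffices (𝓓 a 𝒜).image (· ∩ T) = 𝒜.image (· ∩ T) by rw [this]
    have herase : ∀ s : Finset α, s.erase a ∩ T = s ∩ T := fun s ↦ by
      rw [erase_inter, erase_eq_of_notMem (fun h ↦ haT (mem_inter.1 h).2)]
    ext S
    simp only [mem_image]
    constructor
    · rintro ⟨s, hs, rfl⟩
      rcases Down.mem_compression.1 hs with ⟨hs, -⟩ | ⟨-, hins⟩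
      · exact ⟨s, hs, rfl⟩
      · exact ⟨insert a s, hins, by rw [← herase, erase_insert_eq_erase, herase]⟩
    · rintro ⟨s, hs, rfl⟩
      exact ⟨s.erase a, Down.erase_mem_compression hs, herase s⟩

theorem sum_card_compression_lt (hs : s ∈ 𝒜) (hse : s.erase a ∉ 𝒜) :
    ∑ t ∈ 𝓓 a 𝒜, #t < ∑ t ∈ 𝒜, #t := by
  have has : a ∈ s := by
    by_contra h
    exact hse (by rwa [erase_eq_of_notMem h])
  rw [Down.compression, sum_disjUnion, filter_image,
    ← sum_filter_add_sum_filter_not 𝒜 (fun t ↦ t.erase a ∈ 𝒜)]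
  gcongr
  calc ∑ t ∈ {t ∈ 𝒜 | t.erase a ∉ 𝒜}.image (erase · a), #t
      ≤ ∑ t ∈ 𝒜 with t.erase a ∉ 𝒜, #(t.erase a) :=
        sum_image_le_of_nonneg fun _ _ ↦ Nat.zero_le _
    _ < ∑ t ∈ 𝒜 with t.erase a ∉ 𝒜, #t :=
      sum_lt_sum (fun t _ ↦ card_le_card (erase_subset a t))
        ⟨s, mem_filter.2 ⟨hs, hse⟩, card_erase_lt_of_mem has⟩

theorem isLowerSet_of_forall_erase_mem (h : ∀ s ∈ 𝒜, ∀ a, s.erase a ∈ 𝒜) :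
    IsLowerSet (𝒜 : Set (Finset α)) := by
  intro s t hts hs
  have key : ∀ D : Finset α, s \ D ∈ 𝒜 := fun D ↦ by
    induction D using Finset.induction_on with
    | empty => simpa using hs
    | insert d D _ ih => rw [sdiff_insert]; exact h _ ih d
  simpa [sdiff_sdiff_eq_self hts] using key (s \ t)

theorem exists_isLowerSet_card_eq_card_image_inter_le (𝒜 : Finset (Finset α)) :
    ∃ ℬ : Finset (Finset α), IsLowerSet (ℬ : Set (Finset α)) ∧ #ℬ = #𝒜 ∧
      ∀ T, #(ℬ.image (· ∩ T)) ≤ #(𝒜.image (· ∩ T)) := by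
  induction h : ∑ t ∈ 𝒜, #t using Nat.strong_induction_on generalizing 𝒜 with
  | _ m ih =>
  by_cases hdown : ∀ s ∈ 𝒜, ∀ a, s.erase a ∈ 𝒜
  · exact ⟨𝒜, isLowerSet_of_forall_erase_mem hdown, rfl, fun _ ↦ le_rfl⟩
  push Not at hdown
  obtain ⟨s, hs, a, hse⟩ := hdown
  obtain ⟨ℬ, hℬ, hcard, htr⟩ := ih _ (h ▸ sum_card_compression_lt hs hse) (𝓓 a 𝒜) rfl
  exact ⟨ℬ, hℬ, hcard.trans (Down.card_compression a 𝒜),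
    fun T ↦ (htr T).trans (card_image_inter_compression_le a 𝒜 T)⟩

end Finset

namespace SimpleGraph

theorem card_edgeFinset_turanGraph_two (n : ℕ) :
    #(turanGraph n 2).edgeFinset = n ^ 2 / 4 := by
  rw [card_edgeFinset_turanGraph, Nat.choose_eq_zero_of_lt (Nat.mod_lt n two_pos)]
  rcases Nat.even_or_odd' n with ⟨k, rfl | rfl⟩
  · have : (2 * k) ^ 2 = 4 * k ^ 2 := by ring
    simp [this]
  · have : (2 * k + 1) ^ 2 = 4 * (k ^ 2 + k) + 1 := by ring
    simp [this, Nat.add_mod]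
    omega

section

variable {V : Type*} [Fintype V]

theorem card_edgeFinset_le_of_cliqueFree_three {G : SimpleGraph V} [DecidableRel G.Adj]
    (hG : G.CliqueFree 3) : #G.edgeFinset ≤ Fintype.card V ^ 2 / 4 :=
  (CliqueFree.card_edgeFinset_le (r := 2) hG).trans_eq
    (card_edgeFinset_turanGraph.symm.trans (card_edgeFinset_turanGraph_two _))

variable [DecidableEq V] (G : SimpleGraph V) [DecidableRel G.Adj]

def smallCliques : Finset (Finset V) := (range 3).biUnion G.cliqueFinset

variable {G} in
theorem mem_smallCliques {s : Finset V} :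
    s ∈ G.smallCliques ↔ G.IsClique (s : Set V) ∧ #s < 3 := by
  simp [smallCliques, mem_cliqueFinset_iff, isNClique_iff, and_comm]

theorem card_cliqueFinset_two : #(G.cliqueFinset 2) = #G.edgeFinset := by
  symm
  refine card_nbij Sym2.toFinset ?_ ?_ ?_
  · intro e he
    induction e with
    | h a b =>
      have hab : G.Adj a b := by simpa using he
      simp [Sym2.toFinset_mk_eq, isNClique_iff, hab, hab.ne]
  · exact fun e _ f _ hef ↦
      Sym2.ext fun x ↦ by rw [← Sym2.mem_toFinset, hef, Sym2.mem_toFinset]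
  · intro s hs
    obtain ⟨a, b, hab, rfl⟩ := card_eq_two.1 (mem_cliqueFinset_iff.1 hs).card_eq
    refine ⟨s(a, b), ?_, Sym2.toFinset_mk_eq⟩
    simpa [isNClique_iff, hab] using hs

theorem card_smallCliques : #G.smallCliques = 1 + Fintype.card V + #G.edgeFinset := by
  rw [smallCliques, card_biUnion]
  · have h0 : G.cliqueFinset 0 = {∅} := by ext; simp [mem_cliqueFinset_iff]
    have h1 : G.cliqueFinset 1 = univ.map ⟨({·}), singleton_injective⟩ := by
      ext; simp [mem_cliqueFinset_iff, eq_comm]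
    simp [sum_range_succ, h0, h1, card_cliqueFinset_two]
  · intro i _ j _ hij
    exact Finset.disjoint_left.2 fun s hi hj ↦
      hij ((mem_cliqueFinset_iff.1 hi).card_eq.symm.trans (mem_cliqueFinset_iff.1 hj).card_eq)

theorem card_image_inter_smallCliques_le_six (hG : G.CliqueFree 3) {T : Finset V}
    (hT : #T = 3) :
    #(G.smallCliques.image (· ∩ T)) ≤ 6 := by
  have hTnot : ¬G.IsClique (T : Set V) := fun h ↦ hG T ⟨h, hT⟩
  obtain ⟨x, hx, y, hy, hxy, hnadj⟩ : ∃ x ∈ T, ∃ y ∈ T, x ≠ y ∧ ¬G.Adj x y := by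
    simpa [IsClique, Set.Pairwise] using hTnot
  have hpair : {x, y} ∈ T.powerset.erase T := by
    refine mem_erase.2 ⟨fun h ↦ ?_, mem_powerset.2 (insert_subset_iff.2 ⟨hx, by simpa⟩)⟩
    simpa [h, hT] using card_pair hxy
  have hsub : G.smallCliques.image (· ∩ T) ⊆ (T.powerset.erase T).erase {x, y} := by
    simp only [subset_iff, mem_image, forall_exists_index, and_imp]
    rintro _ s hs rfl
    have hclique : G.IsClique ((s ∩ T : Finset V) : Set V) :=
      (mem_smallCliques.1 hs).1.subset (coe_subset.2 inter_subset_left)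
    refine mem_erase.2 ⟨fun h ↦ hnadj ?_, mem_erase.2 ⟨fun h ↦ hTnot ?_, by simp⟩⟩
    · exact (h ▸ hclique : G.IsClique ({x, y} : Finset V)) (by simp) (by simp) hxy
    · exact h ▸ hclique
  calc #(G.smallCliques.image (· ∩ T))
      ≤ #((T.powerset.erase T).erase {x, y}) := card_le_card hsub
    _ = 6 := by
      rw [card_erase_of_mem hpair, card_erase_of_mem (mem_powerset_self T), card_powerset, hT]
      rfl

end

variable {V : Type*} [DecidableEq V]

def fromPairs (𝒜 : Finset (Finset V)) : SimpleGraph V where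
  Adj a b := a ≠ b ∧ {a, b} ∈ 𝒜
  symm := ⟨fun a b h ↦ ⟨h.1.symm, pair_comm a b ▸ h.2⟩⟩
  loopless := ⟨fun _ h ↦ h.1 rfl⟩

theorem fromPairs_adj {𝒜 : Finset (Finset V)} {a b : V} :
    (fromPairs 𝒜).Adj a b ↔ a ≠ b ∧ {a, b} ∈ 𝒜 :=
  Iff.rfl

instance (𝒜 : Finset (Finset V)) : DecidableRel (fromPairs 𝒜).Adj :=
  fun _ _ ↦ inferInstanceAs (Decidable (_ ∧ _))

end SimpleGraph

open SimpleGraph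

namespace Finset

variable {V : Type*} [DecidableEq V] {𝒜 : Finset (Finset V)}

theorem exists_ssubset_notMem_of_card_image_inter_le_six
    (htr : ∀ T : Finset V, #T = 3 → #(𝒜.image (· ∩ T)) ≤ 6) {T : Finset V} (hT : #T = 3) :
    ∃ S ⊂ T, S ∉ 𝒜 := by
  by_contra! h
  have := (two_pow_card_sub_one_le_card_image_inter h).trans (htr T hT)
  simp [hT] at this

theorem cliqueFree_three_fromPairs (h𝒜 : IsLowerSet (𝒜 : Set (Finset V)))
    (htr : ∀ T : Finset V, #T = 3 → #(𝒜.image (· ∩ T)) ≤ 6) :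
    (fromPairs 𝒜).CliqueFree 3 := by
  intro T hT
  obtain ⟨S, hST, hS⟩ := exists_ssubset_notMem_of_card_image_inter_le_six htr hT.card_eq
  obtain ⟨x, hxT, hxS⟩ := exists_of_ssubset hST
  have hTx2 : #(T.erase x) = 2 := by rw [card_erase_of_mem hxT, hT.card_eq]
  obtain ⟨a, b, hab, hTx⟩ := card_eq_two.1 hTx2
  have hadj : (fromPairs 𝒜).Adj a b :=
    hT.isClique.subset (coe_subset.2 (hTx ▸ erase_subset x T)) (by simp) (by simp) hab
  have hSab : S ⊆ {a, b} := hTx ▸ subset_erase.2 ⟨hST.subset, hxS⟩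
  exact hS (h𝒜 hSab (fromPairs_adj.1 hadj).2)

variable [Fintype V]

theorem subset_smallCliques_fromPairs (h𝒜 : IsLowerSet (𝒜 : Set (Finset V)))
    (htr : ∀ T : Finset V, #T = 3 → #(𝒜.image (· ∩ T)) ≤ 6) :
    𝒜 ⊆ (fromPairs 𝒜).smallCliques := by
  intro A hA
  refine mem_smallCliques.2 ⟨fun a ha b hb hab ↦ fromPairs_adj.2 ⟨hab, h𝒜 ?_ hA⟩, ?_⟩
  · exact insert_subset ha (singleton_subset_iff.2 hb)
  · by_contra! hA3
    obtain ⟨T, hTA, hT⟩ := exists_subset_card_eq hA3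
    obtain ⟨S, hST, hS⟩ := exists_ssubset_notMem_of_card_image_inter_le_six htr hT
    exact hS (h𝒜 (hST.subset.trans hTA) hA)

theorem card_le_of_isLowerSet_of_card_image_inter_le_six
    (h𝒜 : IsLowerSet (𝒜 : Set (Finset V)))
    (htr : ∀ T : Finset V, #T = 3 → #(𝒜.image (· ∩ T)) ≤ 6) :
    #𝒜 ≤ Fintype.card V ^ 2 / 4 + Fintype.card V + 1 := by
  have hedges := card_edgeFinset_le_of_cliqueFree_three (cliqueFree_three_fromPairs h𝒜 htr)
  calc #𝒜
      ≤ #(fromPairs 𝒜).smallCliques := card_le_card (subset_smallCliques_fromPairs h𝒜 htr)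
    _ = 1 + Fintype.card V + #(fromPairs 𝒜).edgeFinset := card_smallCliques _
    _ ≤ Fintype.card V ^ 2 / 4 + Fintype.card V + 1 := by omega

end Finset

theorem frankl_3_7_general (n : ℕ) :
    (∀ 𝓕 : Finset (Finset (Fin n)), n ^ 2 / 4 + n + 2 ≤ 𝓕.card →
      ∃ T : Finset (Fin n), T.card = 3 ∧ 7 ≤ (𝓕.image (· ∩ T)).card) ∧
    (∃ 𝓕 : Finset (Finset (Fin n)), 𝓕.card = n ^ 2 / 4 + n + 1 ∧
      ∀ T : Finset (Fin n), T.card = 3 → (𝓕.image (· ∩ T)).card ≤ 6) := by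
  refine ⟨fun 𝓕 hcard ↦ ?_, ?_⟩
  · by_contra! hsmall
    obtain ⟨𝒢, h𝒢, hcard𝒢, htr𝒢⟩ := exists_isLowerSet_card_eq_card_image_inter_le 𝓕
    have := card_le_of_isLowerSet_of_card_image_inter_le_six h𝒢
      fun T hT ↦ (htr𝒢 T).trans (Nat.le_of_lt_succ (hsmall T hT))
    simp only [Fintype.card_fin] at this
    omega
  · refine ⟨(turanGraph n 2).smallCliques, ?_, fun T hT ↦
      card_image_inter_smallCliques_le_six _ (turanGraph_cliqueFree two_pos) hT⟩
    rw [card_smallCliques, card_edgeFinset_turanGraph_two, Fintype.card_fin]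
    ring

/-- Frankl (1983): `m(n,3,7) = ⌊n²/4⌋ + n + 2`. Every family of size at least
`⌊n²/4⌋ + n + 2` has a 3-set with trace of size at least 7, and this is tight. -/
theorem frankl_3_7 (n : ℕ) (hn : 1 ≤ n) :
    (∀ 𝓕 : Finset (Finset (Fin n)), n ^ 2 / 4 + n + 2 ≤ 𝓕.card →
      ∃ T : Finset (Fin n), T.card = 3 ∧ 7 ≤ (𝓕.image (· ∩ T)).card) ∧
    (∃ 𝓕 : Finset (Finset (Fin n)), 𝓕.card = n ^ 2 / 4 + n + 1 ∧
      ∀ T : Finset (Fin n), T.card = 3 → (𝓕.image (· ∩ T)).card ≤ 6) :=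
  frankl_3_7_general n
end

section
/- (Bondy) Every family F ⊆ 2^[n] with |F| ≥ n has an (n−1)-element subset T ⊆ [n] such that |F|_T| ≥ |F|, i.e., all members of F remain distinct after deleting some single element; equivalently, (n, n) → (n−1, n). Moreover, the bound is tight: there is a family of size n+1 (e.g., the empty set together with all singletons) such that deleting any single element identifies two of its members. -/
open Finset Module

namespace BondyAux

variable {n : ℕ}

/-- characteristic vector over GF(2) -/
noncomputable def v (F : Finset (Fin n)) : Fin n → ZMod 2 :=
  fun j => if j ∈ F then 1 else 0

lemma v_sub_eq_single {F G : Finset (Fin n)} {i : Fin n}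
    (h : F ∩ Finset.univ.erase i = G ∩ Finset.univ.erase i) (hne : F ≠ G) :
    v F - v G = Pi.single i 1 := by
  have hmem : ∀ j : Fin n, j ≠ i → (j ∈ F ↔ j ∈ G) := by
    intro j hj
    constructor <;> intro hjm
    · have h1 : j ∈ F ∩ Finset.univ.erase i := by
        simp [Finset.mem_inter, Finset.mem_erase, hj, hjm]
      rw [h] at h1
      exact (Finset.mem_inter.mp h1).1
    · have h1 : j ∈ G ∩ Finset.univ.erase i := by
        simp [Finset.mem_inter, Finset.mem_erase, hj, hjm]
      rw [← h] at h1
      exact (Finset.mem_inter.mp h1).1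
  have hi : ¬ (i ∈ F ↔ i ∈ G) := by
    intro hiff
    apply hne
    ext j
    by_cases hj : j = i
    · subst hj; exact hiff
    · exact hmem j hj
  funext j
  by_cases hj : j = i
  · subst hj
    simp only [Pi.sub_apply, v, Pi.single_eq_same]
    by_cases hjF : j ∈ F
    · have hjG : j ∉ G := fun hjG => hi ⟨fun _ => hjG, fun _ => hjF⟩
      simp [hjF, hjG]
    · have hjG : j ∈ G := by
        by_contra hjG
        exact hi ⟨fun h => absurd h hjF, fun h => absurd h hjG⟩
      simp [hjF, hjG]
  · have := hmem j hj
    simp only [Pi.sub_apply, v, Pi.single_eq_of_ne hj]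
    by_cases hjF : j ∈ F
    · simp [hjF, this.mp hjF]
    · have hjG : j ∉ G := fun h => hjF (this.mpr h)
      simp [hjF, hjG]

lemma key (hn : 1 ≤ n) (𝓖 : Finset (Finset (Fin n))) (hc : 𝓖.card = n) :
    ∃ i : Fin n, Set.InjOn (· ∩ Finset.univ.erase i) ↑𝓖 := by
  by_contra hcon
  push_neg at hcon
  have hpair : ∀ i : Fin n, ∃ F ∈ 𝓖, ∃ G ∈ 𝓖,
      F ∩ Finset.univ.erase i = G ∩ Finset.univ.erase i ∧ F ≠ G := by
    intro i
    have h := hcon i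
    rw [Set.InjOn] at h
    push_neg at h
    obtain ⟨F, hF, G, hG, h1, h2⟩ := h
    exact ⟨F, hF, G, hG, h1, h2⟩
  have hne : 𝓖.Nonempty := Finset.card_pos.mp (by omega)
  obtain ⟨F₀, hF₀⟩ := hne
  obtain ⟨S, hS⟩ : ∃ S : Finset (Fin n → ZMod 2), S = 𝓖.image (fun F => v F - v F₀) :=
    ⟨_, rfl⟩
  obtain ⟨W, hW⟩ : ∃ W : Submodule (ZMod 2) (Fin n → ZMod 2),
      W = Submodule.span (ZMod 2) ↑S := ⟨_, rfl⟩
  have hgen : ∀ F ∈ 𝓖, v F - v F₀ ∈ W := by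
    intro F hF
    rw [hW]
    exact Submodule.subset_span (by rw [hS]; simp; exact ⟨F, hF, rfl⟩)
  have hsingle : ∀ i : Fin n, (Pi.single i 1 : Fin n → ZMod 2) ∈ W := by
    intro i
    obtain ⟨F, hF, G, hG, h1, h2⟩ := hpair i
    have : (Pi.single i 1 : Fin n → ZMod 2) = (v F - v F₀) - (v G - v F₀) := by
      rw [← v_sub_eq_single h1 h2]; abel
    rw [this]
    exact sub_mem (hgen F hF) (hgen G hG)
  have htop : W = ⊤ := by
    rw [eq_top_iff]
    intro x _
    have hx : x = ∑ i : Fin n, x i • (Pi.single i 1 : Fin n → ZMod 2) := by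
      funext j
      simp [Pi.single_apply, Finset.sum_ite_eq', mul_comm]
    rw [hx]
    exact Submodule.sum_mem _ fun i _ => Submodule.smul_mem _ _ (hsingle i)
  -- rank bound
  have h0 : (0 : Fin n → ZMod 2) ∈ S := by
    rw [hS]; simp; exact ⟨F₀, hF₀, by simp⟩
  have hspan : (S : Set (Fin n → ZMod 2)) = insert 0 ↑(S.erase 0) := by
    rw [Finset.coe_erase]
    rw [Set.insert_diff_singleton]
    exact (Set.insert_eq_self.mpr (by exact_mod_cast h0)).symm
  have hrank : finrank (ZMod 2) W ≤ n - 1 := by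
    have h1 : W = Submodule.span (ZMod 2) ↑(S.erase 0) := by
      rw [hW]
      rw [show (S : Set (Fin n → ZMod 2)) = insert 0 ↑(S.erase 0) from hspan]
      exact Submodule.span_insert_zero
    rw [h1]
    have h2 : finrank (ZMod 2) (Submodule.span (ZMod 2) (↑(S.erase 0) : Set (Fin n → ZMod 2)))
        ≤ (S.erase 0).card := finrank_span_finset_le_card (S.erase 0)
    have h3 : (S.erase 0).card = S.card - 1 := Finset.card_erase_of_mem h0
    have hScard : S.card ≤ n := by
      rw [hS]; exact Finset.card_image_le.trans hc.le
    omega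
  have hfull : finrank (ZMod 2) W = n := by
    rw [htop, finrank_top]
    simp [Module.finrank_fintype_fun_eq_card]
  omega

end BondyAux

/-- Bondy's theorem: `(n, n) → (n-1, n)`, i.e. every family of at least `n` subsets
of `[n]` keeps at least `n` distinct traces after deleting some single element;
moreover this is tight: some family of `n + 1` sets loses a member on every
`(n-1)`-set. -/
theorem bondy (n : ℕ) (hn : 1 ≤ n) :
    (∀ 𝓕 : Finset (Finset (Fin n)), n ≤ 𝓕.card →
      ∃ T : Finset (Fin n), T.card = n - 1 ∧ n ≤ (𝓕.image (· ∩ T)).card) ∧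
    (∃ 𝓕 : Finset (Finset (Fin n)), 𝓕.card = n + 1 ∧
      ∀ T : Finset (Fin n), T.card = n - 1 → (𝓕.image (· ∩ T)).card < n + 1) := by
  constructor
  · intro 𝓕 hcard
    obtain ⟨𝓖, h𝓖sub, h𝓖card⟩ := Finset.exists_subset_card_eq hcard
    obtain ⟨i, hinj⟩ := BondyAux.key hn 𝓖 h𝓖card
    refine ⟨Finset.univ.erase i, ?_, ?_⟩
    · simp [Finset.card_erase_of_mem]
    · calc n = 𝓖.card := h𝓖card.symm
        _ = (𝓖.image (· ∩ Finset.univ.erase i)).card :=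
            (Finset.card_image_of_injOn hinj).symm
        _ ≤ (𝓕.image (· ∩ Finset.univ.erase i)).card :=
            Finset.card_le_card (Finset.image_subset_image h𝓖sub)
  · refine ⟨insert ∅ (Finset.univ.image fun i : Fin n => ({i} : Finset (Fin n))), ?_, ?_⟩
    · rw [Finset.card_insert_of_notMem (by simp)]
      rw [Finset.card_image_of_injective _ (fun a b h => Finset.singleton_injective h)]
      simp
    · intro T hT
      set 𝓕 := insert ∅ (Finset.univ.image fun i : Fin n => ({i} : Finset (Fin n))) with h𝓕
      have hcard : 𝓕.card = n + 1 := by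
        rw [h𝓕, Finset.card_insert_of_notMem (by simp)]
        rw [Finset.card_image_of_injective _ (fun a b h => Finset.singleton_injective h)]
        simp
      have hle : (𝓕.image (· ∩ T)).card ≤ n + 1 := hcard ▸ Finset.card_image_le
      rcases lt_or_eq_of_le hle with h | h
      · exact h
      exfalso
      have hinj : Set.InjOn (· ∩ T) ↑𝓕 := by
        rw [← Finset.card_image_iff]; omega
      -- find i ∉ T
      have hTne : T ≠ Finset.univ := by
        intro hTu
        rw [hTu] at hT
        simp at hT
        omega
      obtain ⟨i, hi⟩ : ∃ i : Fin n, i ∉ T := by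
        by_contra hcon
        push_neg at hcon
        exact hTne (Finset.eq_univ_iff_forall.mpr hcon)
      have h1 : (∅ : Finset (Fin n)) ∈ 𝓕 := by simp [h𝓕]
      have h2 : ({i} : Finset (Fin n)) ∈ 𝓕 := by simp [h𝓕]
      have h3 : (∅ : Finset (Fin n)) ∩ T = ({i} : Finset (Fin n)) ∩ T := by
        simp [Finset.singleton_inter_of_notMem hi]
      have := hinj (Finset.mem_coe.mpr h1) (Finset.mem_coe.mpr h2) h3
      exact (Finset.singleton_ne_empty i) this.symm
end

section
/- Every hereditary family F ⊆ 2^[n] in which every element of [n] has degree at least 2^{d-1} (i.e. with minimum degree δ(F) ≥ 2^{d−1}) satisfies |F| > ⌈(2^d − 1)n/d⌉. -/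
set_option maxHeartbeats 1000000

open Finset FinsetFamily

lemma hmdb_abel (w a : ℕ → ℚ) (hw : ∀ t, w (t+1) ≤ w t) :
    ∀ N, (∀ i, i ≤ N → 0 ≤ ∑ t ∈ range (i+1), a t) →
      (∑ t ∈ range (N+1), a t) * w N ≤ ∑ t ∈ range (N+1), a t * w t := by
  intro N
  induction N with
  | zero => intro _; simp
  | succ N ih =>
    intro hA
    have h1 := ih (fun i hi => hA i (hi.trans (Nat.le_succ N)))
    have h2 : (∑ t ∈ range (N+1), a t) * w (N+1) ≤ (∑ t ∈ range (N+1), a t) * w N :=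
      mul_le_mul_of_nonneg_left (hw N) (hA N (Nat.le_succ N))
    rw [sum_range_succ, sum_range_succ (fun t => a t * w t), add_mul]
    linarith [h1, h2]

lemma hmdb_katona (n k : ℕ) (hkn : k ≤ n) (𝒢 : Finset (Finset (Fin n)))
    (hered : ∀ A ∈ 𝒢, ∀ B ⊆ A, B ∈ 𝒢)
    (hcard : 2 ^ k ≤ 𝒢.card) :
    ((2 ^ (k+1) - 1 : ℚ)) / (k+1) ≤ ∑ G ∈ 𝒢, (1 : ℚ) / (G.card + 1) := by
  set c : ℕ → ℕ := fun s => (𝒢.filter fun G => G.card = s).card with hc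
  -- empty level propagates up
  have hzero : ∀ s, c s = 0 → c (s+1) = 0 := by
    intro s hs
    by_contra h
    obtain ⟨G, hG⟩ := card_pos.1 (Nat.pos_of_ne_zero h)
    rw [mem_filter] at hG
    obtain ⟨x, hx⟩ := card_pos.1 (by rw [hG.2]; exact Nat.succ_pos s)
    have hGx : G.erase x ∈ 𝒢 := hered G hG.1 _ (erase_subset x G)
    have hmem : G.erase x ∈ 𝒢.filter fun G => G.card = s := by
      rw [mem_filter]
      exact ⟨hGx, by rw [card_erase_of_mem hx, hG.2]; rfl⟩
    have h2 : 0 < c s := card_pos.2 ⟨_, hmem⟩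
    omega
  -- Kruskal-Katona step
  have hKK : ∀ s, s < k → c s < k.choose s → c (s+1) < k.choose (s+1) := by
    intro s hsk hcs
    by_contra h
    push_neg at h
    set 𝒜 := 𝒢.filter fun G => G.card = s + 1 with h𝒜
    have hsized : (𝒜 : Set (Finset (Fin n))).Sized (s+1) := by
      intro G hG
      simpa using (mem_filter.1 hG).2
    have hKKlov := Finset.kruskal_katona_lovasz_form (i := 1) (r := s+1) (k := k)
      (Nat.succ_le_succ (Nat.zero_le s)) hsk hkn hsized h
    have hsub : ∂ 𝒜 ⊆ 𝒢.filter fun G => G.card = s := by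
      intro B hB
      obtain ⟨A, hA, x, hx, rfl⟩ := mem_shadow_iff.1 hB
      rw [mem_filter] at hA ⊢
      refine ⟨hered A hA.1 _ (erase_subset x A), ?_⟩
      rw [card_erase_of_mem hx, hA.2]
      rfl
    have h4 : k.choose s ≤ c s := by
      refine le_trans ?_ (card_le_card hsub)
      simpa using hKKlov
    omega
  -- the propagating predicate
  have hP : ∀ s t, s ≤ t → (c s < k.choose s ∨ c s = 0) → (c t < k.choose t ∨ c t = 0) := by
    intro s t hst
    induction t, hst using Nat.le_induction with
    | base => exact id
    | succ t _ ih =>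
      intro h
      rcases ih h with h1 | h1
      · rcases Nat.lt_or_ge t k with h2 | h2
        · exact Or.inl (hKK t h2 h1)
        · have : k.choose t ≤ 1 := by
            rcases Nat.eq_or_lt_of_le h2 with rfl | h3
            · simp
            · rw [Nat.choose_eq_zero_of_lt h3]; omega
          exact Or.inr (hzero t (by omega))
      · exact Or.inr (hzero t h1)
  -- total count
  have htotal : 𝒢.card = ∑ t ∈ range (n+1), c t := by
    apply card_eq_sum_card_fiberwise
    intro G _
    rw [mem_coe, mem_range]
    exact Nat.lt_succ_of_le ((card_le_univ G).trans_eq (Fintype.card_fin n))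
  have hchoosetotal : ∑ t ∈ range (n+1), k.choose t = 2 ^ k := by
    rw [← Nat.sum_range_choose k]
    apply (Finset.sum_subset (range_subset_range.2 (by omega)) ?_).symm
    intro t _ ht
    rw [mem_range, not_lt] at ht
    exact Nat.choose_eq_zero_of_lt (by omega)
  -- cumulative domination
  have hcum : ∀ i, i ≤ n → ∑ t ∈ range (i+1), k.choose t ≤ ∑ t ∈ range (i+1), c t := by
    intro i hin
    by_cases hall : ∀ t ∈ range (i+1), k.choose t ≤ c t
    · exact sum_le_sum hall
    · push_neg at hall
      obtain ⟨t0, ht0i, ht0⟩ := hall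
      rw [mem_range] at ht0i
      have hub : ∀ t, i + 1 ≤ t → c t ≤ k.choose t := by
        intro t ht
        rcases hP t0 t (by omega) (Or.inl ht0) with h | h
        · omega
        · omega
      have hsplit : ∑ t ∈ range (i+1), c t + ∑ t ∈ Ico (i+1) (n+1), c t
          = ∑ t ∈ range (n+1), c t := by
        rw [range_eq_Ico, range_eq_Ico]
        exact Finset.sum_Ico_consecutive c (Nat.zero_le (i+1)) (by omega : i+1 ≤ n+1)
      have hsplit2 : ∑ t ∈ range (i+1), k.choose t + ∑ t ∈ Ico (i+1) (n+1), k.choose t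
          = ∑ t ∈ range (n+1), k.choose t := by
        rw [range_eq_Ico, range_eq_Ico]
        exact Finset.sum_Ico_consecutive k.choose (Nat.zero_le (i+1)) (by omega : i+1 ≤ n+1)
      have hIco : ∑ t ∈ Ico (i+1) (n+1), c t ≤ ∑ t ∈ Ico (i+1) (n+1), k.choose t := by
        apply sum_le_sum
        intro t ht
        exact hub t (mem_Ico.1 ht).1
      have h2k : ∑ t ∈ range (n+1), k.choose t ≤ ∑ t ∈ range (n+1), c t := by
        rw [hchoosetotal, ← htotal]; exact hcard
      omega
  -- apply abel summation
  have hAnn : ∀ i, i ≤ n → 0 ≤ ∑ t ∈ range (i+1), ((c t : ℚ) - (k.choose t : ℚ)) := by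
    intro i hi
    rw [Finset.sum_sub_distrib, sub_nonneg]
    exact_mod_cast hcum i hi
  have habel := hmdb_abel (fun t => (1 : ℚ)/(t+1)) (fun t => (c t : ℚ) - (k.choose t : ℚ))
    (fun t => by
      apply one_div_le_one_div_of_le
      · positivity
      · push_cast; linarith) n
    (fun i hi => hAnn i hi)
  have hge : 0 ≤ (∑ t ∈ range (n+1), ((c t : ℚ) - (k.choose t : ℚ))) * ((1:ℚ)/(n+1)) :=
    mul_nonneg (hAnn n le_rfl) (by positivity)
  have hmain : ∑ t ∈ range (n+1), (k.choose t : ℚ) * (1/(t+1))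
      ≤ ∑ t ∈ range (n+1), (c t : ℚ) * (1/(t+1)) := by
    have h0 : (0:ℚ) ≤ ∑ t ∈ range (n+1), ((c t : ℚ) - (k.choose t : ℚ)) * (1/(t+1)) :=
      le_trans hge habel
    have h1 : ∑ t ∈ range (n+1), ((c t : ℚ) - (k.choose t : ℚ)) * (1/(t+1))
        = ∑ t ∈ range (n+1), (c t : ℚ) * (1/(t+1))
          - ∑ t ∈ range (n+1), (k.choose t : ℚ) * (1/(t+1)) := by
      rw [← Finset.sum_sub_distrib]
      exact sum_congr rfl fun t _ => by ring
    linarith [h0, h1.symm.trans_le (le_of_eq rfl)]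
  -- evaluate the choose sum
  have hbinom : ∑ t ∈ range (n+1), (k.choose t : ℚ) * (1/(t+1)) = (2^(k+1) - 1)/(k+1) := by
    rw [← Finset.sum_subset (range_subset_range.2 (by omega : k+1 ≤ n+1))
      (fun t _ ht => by
        rw [mem_range, not_lt] at ht
        rw [Nat.choose_eq_zero_of_lt (by omega)]
        simp)]
    have hterm : ∀ t ∈ range (k+1), (k.choose t : ℚ) * (1/(t+1))
        = ((k+1).choose (t+1) : ℚ) * (1/(k+1)) := by
      intro t _
      have hnat := Nat.add_one_mul_choose_eq k t
      have hq : ((k:ℚ)+1) * (k.choose t) = ((k+1).choose (t+1) : ℚ) * ((t:ℚ)+1) := by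
        exact_mod_cast hnat
      have ht1 : ((t:ℚ)+1) ≠ 0 := by positivity
      have hk1 : ((k:ℚ)+1) ≠ 0 := by positivity
      field_simp
      linarith [hq]
    rw [sum_congr rfl hterm, ← sum_mul]
    have hS : ∑ t ∈ range (k+1), ((k+1).choose (t+1)) = 2^(k+1) - 1 := by
      have h1 := Finset.sum_range_succ' (fun j => (k+1).choose j) (k+1)
      have h2 := Nat.sum_range_choose (k+1)
      simp only [Nat.choose_zero_right] at h1
      omega
    have hScast : (∑ t ∈ range (k+1), (((k+1).choose (t+1)) : ℚ)) = 2^(k+1) - 1 := by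
      rw [← Nat.cast_sum, hS]
      push_cast [Nat.one_le_two_pow]
      ring
    rw [← Nat.cast_sum] at hScast ⊢
    rw [hScast]
    ring
  -- evaluate the family sum
  have hfam : ∑ G ∈ 𝒢, (1:ℚ)/(G.card+1)
      = ∑ t ∈ range (n+1), (c t : ℚ) * (1/(t+1)) := by
    rw [← sum_fiberwise_of_maps_to (g := fun G : Finset (Fin n) => G.card)
      (fun G _ => mem_range.2 (Nat.lt_succ_of_le ((card_le_univ G).trans_eq (Fintype.card_fin n))))
      (fun G => (1:ℚ)/(G.card+1))]
    apply sum_congr rfl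
    intro t _
    have : ∀ G ∈ 𝒢.filter (fun G => G.card = t), (1:ℚ)/(G.card+1) = 1/(t+1) := by
      intro G hG
      rw [(mem_filter.1 hG).2]
    rw [sum_congr rfl this, sum_const, nsmul_eq_mul]
  rw [hfam]
  rw [← hbinom]
  exact hmain

/-- A hereditary family on `[n]` with minimum degree at least `2^(d-1)` has more than
`⌈(2^d - 1)n/d⌉` members. -/
theorem hereditary_min_degree_bound (n d : ℕ) (hn : 1 ≤ n) (hd : 1 ≤ d)
    (𝓕 : Finset (Finset (Fin n)))
    (hered : ∀ A ∈ 𝓕, ∀ B ⊆ A, B ∈ 𝓕)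
    (hdeg : ∀ v : Fin n, 2 ^ (d - 1) ≤ (𝓕.filter (fun A => v ∈ A)).card) :
    ⌈((2 ^ d - 1 : ℚ) * n) / d⌉₊ < 𝓕.card := by
  have v0 : Fin n := ⟨0, hn⟩
  -- d - 1 ≤ n
  have hdn : d - 1 ≤ n := by
    have h1 := hdeg v0
    have h2 : (𝓕.filter (fun A => v0 ∈ A)).card ≤ 2 ^ n := by
      calc (𝓕.filter (fun A => v0 ∈ A)).card ≤ Fintype.card (Finset (Fin n)) := card_le_univ _
        _ = 2 ^ n := by simp
    exact (Nat.pow_le_pow_iff_right (by norm_num)).1 (h1.trans h2)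
  have hkd : (d - 1) + 1 = d := Nat.succ_pred_eq_of_pos hd
  -- the empty set belongs
  have hempty : ∅ ∈ 𝓕 := by
    have h1 := hdeg v0
    have h2 : 0 < (𝓕.filter (fun A => v0 ∈ A)).card := lt_of_lt_of_le (by positivity) h1
    obtain ⟨A, hA⟩ := card_pos.1 h2
    exact hered A (mem_filter.1 hA).1 ∅ (empty_subset A)
  -- per-vertex bound via the link
  have hvert : ∀ v : Fin n, ((2 ^ d - 1 : ℚ)) / d ≤ ∑ A ∈ 𝓕.filter (fun A => v ∈ A), (1:ℚ)/A.card := by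
    intro v
    set ℒ : Finset (Finset (Fin n)) := (𝓕.filter (fun A => v ∈ A)).image (fun A => A.erase v) with hL
    have hinj : ∀ A ∈ 𝓕.filter (fun A => v ∈ A), ∀ B ∈ 𝓕.filter (fun A => v ∈ A),
        A.erase v = B.erase v → A = B := by
      intro A hA B hB hAB
      have hvA : v ∈ A := (mem_filter.1 hA).2
      have hvB : v ∈ B := (mem_filter.1 hB).2
      rw [← insert_erase hvA, ← insert_erase hvB, hAB]
    have hLcard : 2 ^ (d-1) ≤ ℒ.card := by
      rw [hL, card_image_of_injOn hinj]
      exact hdeg v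
    have hLhered : ∀ A ∈ ℒ, ∀ B ⊆ A, B ∈ ℒ := by
      intro G hG B hB
      obtain ⟨A, hA, rfl⟩ := mem_image.1 hG
      rw [mem_filter] at hA
      have hvB : v ∉ B := fun h => (notMem_erase v A) (hB h)
      have h1 : insert v B ∈ 𝓕 := by
        apply hered A hA.1
        intro x hx
        rcases mem_insert.1 hx with rfl | hx
        · exact hA.2
        · exact (erase_subset v A) (hB hx)
      refine mem_image.2 ⟨insert v B, mem_filter.2 ⟨h1, mem_insert_self v B⟩, ?_⟩
      rw [erase_insert hvB]
    have hkat := hmdb_katona n (d-1) hdn ℒ hLhered hLcard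
    have hsum : ∑ G ∈ ℒ, (1:ℚ)/(G.card + 1) = ∑ A ∈ 𝓕.filter (fun A => v ∈ A), (1:ℚ)/A.card := by
      rw [hL, sum_image hinj]
      apply sum_congr rfl
      intro A hA
      have hvA : v ∈ A := (mem_filter.1 hA).2
      rw [card_erase_of_mem hvA]
      have h1 : 1 ≤ A.card := card_pos.2 ⟨v, hvA⟩
      congr 1
      rw [Nat.cast_sub h1]
      push_cast
      ring
    rw [hsum] at hkat
    refine le_trans (le_of_eq ?_) hkat
    rw [hkd]
    congr 1
    exact_mod_cast (congrArg (Nat.cast (R := ℚ)) hkd).symm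
  -- double counting
  have hswap : ∑ v : Fin n, ∑ A ∈ 𝓕.filter (fun A => v ∈ A), (1:ℚ)/A.card
      = ∑ A ∈ 𝓕, (A.card : ℚ) * (1/A.card) := by
    have h1 : ∀ v : Fin n, ∑ A ∈ 𝓕.filter (fun A => v ∈ A), (1:ℚ)/A.card
        = ∑ A ∈ 𝓕, if v ∈ A then (1:ℚ)/A.card else 0 := fun v => sum_filter _ _
    rw [sum_congr rfl (fun v _ => h1 v), sum_comm]
    apply sum_congr rfl
    intro A _
    rw [sum_ite_mem, univ_inter, sum_const, nsmul_eq_mul]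
  have hS2 : ∑ A ∈ 𝓕, (A.card : ℚ) * (1/A.card) = (𝓕.card : ℚ) - 1 := by
    have hterm : ∀ A ∈ 𝓕, (A.card : ℚ) * (1/A.card) = if A = ∅ then 0 else 1 := by
      intro A _
      by_cases hA : A = ∅
      · simp [hA]
      · have h0 : (A.card : ℚ) ≠ 0 := by
          simp only [ne_eq, Nat.cast_eq_zero, card_eq_zero]
          exact hA
        rw [if_neg hA]
        field_simp
    rw [sum_congr rfl hterm, sum_ite, sum_const, sum_const, smul_zero, zero_add, nsmul_eq_mul,
      mul_one]
    have : 𝓕.filter (fun A => ¬ A = ∅) = 𝓕.erase ∅ := by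
      ext A
      simp [mem_erase, and_comm]
    rw [this, card_erase_of_mem hempty]
    have hpos : 1 ≤ 𝓕.card := card_pos.2 ⟨∅, hempty⟩
    push_cast [Nat.cast_sub hpos]
    ring
  have hlow : (n : ℚ) * ((2 ^ d - 1 : ℚ) / d) ≤ (𝓕.card : ℚ) - 1 := by
    rw [← hS2, ← hswap]
    calc (n : ℚ) * ((2 ^ d - 1 : ℚ) / d) = ∑ _v : Fin n, ((2 ^ d - 1 : ℚ)) / d := by
          rw [sum_const, card_univ, Fintype.card_fin, nsmul_eq_mul]
      _ ≤ _ := sum_le_sum (fun v _ => hvert v)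
  -- conclude
  have hpos : 1 ≤ 𝓕.card := card_pos.2 ⟨∅, hempty⟩
  have hceil : ⌈((2 ^ d - 1 : ℚ) * n) / d⌉₊ ≤ 𝓕.card - 1 := by
    rw [Nat.ceil_le]
    rw [Nat.cast_sub hpos]
    calc ((2 ^ d - 1 : ℚ) * n) / d = (n : ℚ) * ((2 ^ d - 1 : ℚ) / d) := by ring
      _ ≤ (𝓕.card : ℚ) - 1 := hlow
      _ = ((𝓕.card : ℚ)) - (1:ℕ) := by norm_num
  omega
end

section
/- (Katona's generalization of Kruskal–Katona) If f : ℕ → ℝ is monotone non-increasing and F ⊆ 2^[n] is a hereditary family with |F| = m, then Σ_{F ∈ F} f(|F|) ≥ Σ_{R ∈ R(m)} f(|R|), where R(m) denotes the first m finite subsets of the positive integers in colexicographic order. -/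
/-- The colexicographic value of a finite set of positive integers: the set `S`
is the `colexVal S`-th finite subset of `ℕ⁺` in colexicographic order
(where `A` precedes `B` iff `max (A △ B) ∈ B`). -/
def colexVal (S : Finset ℕ) : ℕ := ∑ i ∈ S, 2 ^ (i - 1)

/-- `Rfam m` is the family of the first `m` finite subsets of `ℕ⁺` in
colexicographic order. -/
def Rfam (m : ℕ) : Finset (Finset ℕ) :=
  (Finset.Icc 1 m).powerset.filter (fun S => colexVal S < m)

/-!
Write `c(j)` for the number of ones in the binary expansion of `j`. The `j`-th set of `R(m)` has
`c(j)` elements, so the sum over `R(m)` is `S_f(m) = ∑_{j < m} f(c(j))` (`colexSum f m`).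
Since `c(2j) = c(j)` and `c(2j+1) = c(j) + 1`, splitting `j < a + b` by parity and inducting on `a`
gives `S_f(a + b) ≤ S_f(a) + S_{f(· + 1)}(b)` for `b ≤ a` and non-increasing `f`.
For a hereditary family `𝓕` and a point `x`, the members avoiding `x` and the members containing
`x`, with `x` removed, are hereditary families `𝓕₀ ⊇ 𝓕₁`, and
`∑_{F ∈ 𝓕} f(|F|) = ∑_{F ∈ 𝓕₀} f(|F|) + ∑_{F ∈ 𝓕₁} f(|F| + 1)`. Induction on the ground set,
with the inequality above for `a = |𝓕₀|`, `b = |𝓕₁|`, proves the theorem.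
-/

open Finset

section ColexSum

variable {M : Type*} [AddCommMonoid M]

def bitCount (n : ℕ) : ℕ := n.bitIndices.length

@[simp] lemma bitCount_two_mul (n : ℕ) : bitCount (2 * n) = bitCount n := by simp [bitCount]

@[simp] lemma bitCount_two_mul_add_one (n : ℕ) : bitCount (2 * n + 1) = bitCount n + 1 := by
  simp [bitCount]

def colexSum (f : ℕ → M) (m : ℕ) : M := ∑ j ∈ range m, f (bitCount j)

@[simp] lemma colexSum_zero (f : ℕ → M) : colexSum f 0 = 0 := by simp [colexSum]

lemma colexSum_succ (f : ℕ → M) (m : ℕ) :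
    colexSum f (m + 1) = colexSum f m + f (bitCount m) :=
  sum_range_succ _ _

lemma colexSum_two_mul (f : ℕ → M) (k : ℕ) :
    colexSum f (2 * k) = colexSum f k + colexSum (fun i ↦ f (i + 1)) k := by
  induction k with
  | zero => simp
  | succ k ih =>
    rw [show 2 * (k + 1) = 2 * k + 1 + 1 by ring, colexSum_succ, colexSum_succ, ih, colexSum_succ,
      colexSum_succ, bitCount_two_mul, bitCount_two_mul_add_one]
    abel

lemma colexSum_eq_add_colexSum_half (f : ℕ → M) (m : ℕ) :
    colexSum f m = colexSum f (m - m / 2) + colexSum (fun i ↦ f (i + 1)) (m / 2) := by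
  obtain ⟨k, rfl | rfl⟩ := m.even_or_odd'
  · rw [show 2 * k - 2 * k / 2 = k by omega, show 2 * k / 2 = k by omega, colexSum_two_mul]
  · rw [show 2 * k + 1 - (2 * k + 1) / 2 = k + 1 by omega, show (2 * k + 1) / 2 = k by omega,
      colexSum_succ, colexSum_two_mul, colexSum_succ f k, bitCount_two_mul]
    abel

variable [PartialOrder M] [IsOrderedAddMonoid M]

theorem colexSum_add_le {f : ℕ → M} (hf : Antitone f) {a b : ℕ} (hba : b ≤ a) :
    colexSum f (a + b) ≤ colexSum f a + colexSum (fun i ↦ f (i + 1)) b := by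
  induction a using Nat.strong_induction_on generalizing b f with
  | _ a ih =>
  set f' := fun i ↦ f (i + 1)
  set f'' := fun i ↦ f' (i + 1)
  have hf' : Antitone f' := fun _ _ h ↦ hf (Nat.succ_le_succ h)
  obtain rfl | hba := hba.eq_or_lt
  · rw [← two_mul, colexSum_two_mul]
  obtain rfl | hb := b.eq_zero_or_pos
  · simp
  rw [colexSum_eq_add_colexSum_half f (a + b), colexSum_eq_add_colexSum_half f a,
    colexSum_eq_add_colexSum_half f' b]
  by_cases hodd : a % 2 = 1 ∧ b % 2 = 1
  · set p := a / 2
    set q := b / 2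
    rw [show a - p = p + 1 by omega, show b - q = q + 1 by omega,
      show a + b - (a + b) / 2 = p + (q + 1) by omega, show (a + b) / 2 = (p + 1) + q by omega]
    -- The halves of `a + b` pair up with those of `a` and `b` only up to trading
    -- `f (bitCount p + 1)` for the larger `f (bitCount p)`.
    calc colexSum f (p + (q + 1)) + colexSum f' (p + 1 + q)
        ≤ colexSum f p + colexSum f' (q + 1) + (colexSum f' (p + 1) + colexSum f'' q) :=
          add_le_add (ih p (by omega) hf (by omega)) (ih (p + 1) (by omega) hf' (by omega))
      _ = colexSum f p + f (bitCount p + 1) + colexSum f' p + colexSum f' (q + 1)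
            + colexSum f'' q := by
          rw [colexSum_succ f' p]; abel
      _ ≤ colexSum f p + f (bitCount p) + colexSum f' p + colexSum f' (q + 1)
            + colexSum f'' q := by
          gcongr; exact hf (Nat.le_succ _)
      _ = _ := by rw [colexSum_succ f p]; abel
  · rw [show a + b - (a + b) / 2 = (a - a / 2) + (b - b / 2) by omega,
      show (a + b) / 2 = a / 2 + b / 2 by omega]
    calc colexSum f ((a - a / 2) + (b - b / 2)) + colexSum f' (a / 2 + b / 2)
        ≤ colexSum f (a - a / 2) + colexSum f' (b - b / 2)
            + (colexSum f' (a / 2) + colexSum f'' (b / 2)) :=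
          add_le_add (ih _ (by omega) hf (by omega)) (ih _ (by omega) hf' (by omega))
      _ = _ := by abel

end ColexSum

section LowerSet

variable {α M : Type*} [DecidableEq α] [AddCommMonoid M]

lemma Finset.sum_nonMemberSubfamily_add_sum_memberSubfamily (𝒜 : Finset (Finset α)) (a : α)
    (φ : Finset α → M) :
    ∑ s ∈ 𝒜.nonMemberSubfamily a, φ s + ∑ s ∈ 𝒜.memberSubfamily a, φ (insert a s) =
      ∑ s ∈ 𝒜, φ s := by
  rw [← sum_image (f := φ) fun s hs t ht ↦ insert_erase_invOn.2.injOn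
      (mem_memberSubfamily.1 hs).2 (mem_memberSubfamily.1 ht).2,
    image_insert_memberSubfamily, nonMemberSubfamily, add_comm, sum_filter_add_sum_filter_not]

variable [PartialOrder M] [IsOrderedAddMonoid M]

theorem IsLowerSet.colexSum_card_le_sum_card {𝒜 : Finset (Finset α)}
    (h𝒜 : IsLowerSet (𝒜 : Set (Finset α))) {f : ℕ → M} (hf : Antitone f) :
    colexSum f #𝒜 ≤ ∑ s ∈ 𝒜, f #s := by
  induction 𝒜 using memberFamily_induction_on generalizing f with
  | empty => simp
  | singleton_empty => simp [colexSum, bitCount]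
  | @subfamily a 𝒜 ih₀ ih₁ =>
    rw [← card_memberSubfamily_add_card_nonMemberSubfamily a, add_comm,
      ← sum_nonMemberSubfamily_add_sum_memberSubfamily 𝒜 a]
    calc colexSum f (#(𝒜.nonMemberSubfamily a) + #(𝒜.memberSubfamily a))
        ≤ colexSum f #(𝒜.nonMemberSubfamily a)
            + colexSum (fun i ↦ f (i + 1)) #(𝒜.memberSubfamily a) :=
          colexSum_add_le hf (card_le_card h𝒜.memberSubfamily_subset_nonMemberSubfamily)
      _ ≤ ∑ s ∈ 𝒜.nonMemberSubfamily a, f #s + ∑ s ∈ 𝒜.memberSubfamily a, f (#s + 1) :=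
          add_le_add (ih₀ h𝒜.nonMemberSubfamily hf)
            (ih₁ h𝒜.memberSubfamily fun _ _ h ↦ hf (Nat.succ_le_succ h))
      _ = _ := by
          congr 1
          refine sum_congr rfl fun s hs ↦ ?_
          rw [card_insert_of_notMem (mem_memberSubfamily.1 hs).2]

end LowerSet

section Rfam

/-- The `j`-th finite subset of `ℕ⁺` in colexicographic order, counting from `0`. -/
def colexSet (j : ℕ) : Finset ℕ := j.bitIndices.toFinset.map (addRightEmbedding 1)

lemma card_colexSet (j : ℕ) : #(colexSet j) = bitCount j := by
  simp [colexSet, bitCount, List.card_toFinset, Nat.bitIndices_nodup.dedup]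

lemma colexVal_colexSet (j : ℕ) : colexVal (colexSet j) = j := by
  simp [colexVal, colexSet]

lemma colexSet_colexVal {S : Finset ℕ} (hS : 0 ∉ S) : colexSet (colexVal S) = S := by
  have hpos : ∀ i ∈ S, 0 < i := fun i hi ↦ Nat.pos_of_ne_zero fun h ↦ hS (h ▸ hi)
  have hval : colexVal S = ∑ i ∈ S.image (· - 1), 2 ^ i :=
    (sum_image fun i hi k hk h ↦ by have := hpos i hi; have := hpos k hk; omega).symm
  ext i
  simp only [colexSet, hval, toFinset_bitIndices_sum_two_pow, mem_map, mem_image,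
    addRightEmbedding_apply]
  constructor
  · rintro ⟨_, ⟨k, hk, rfl⟩, rfl⟩
    rwa [Nat.sub_add_cancel (hpos k hk)]
  · intro hi
    exact ⟨i - 1, ⟨i, hi, rfl⟩, Nat.sub_add_cancel (hpos i hi)⟩

lemma colexSet_mem_Rfam {j m : ℕ} (hj : j < m) : colexSet j ∈ Rfam m := by
  refine mem_filter.2 ⟨mem_powerset.2 fun i hi ↦ ?_, by rwa [colexVal_colexSet]⟩
  obtain ⟨k, hk, rfl⟩ := mem_map.1 hi
  have : k < 2 ^ k := Nat.lt_two_pow_self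
  have : 2 ^ k ≤ j := Nat.two_pow_le_of_mem_bitIndices (List.mem_toFinset.1 hk)
  simp only [addRightEmbedding_apply, mem_Icc]
  omega

lemma sum_card_Rfam {M : Type*} [AddCommMonoid M] (f : ℕ → M) (m : ℕ) :
    ∑ R ∈ Rfam m, f #R = colexSum f m := by
  refine (sum_nbij' colexSet colexVal (fun j hj ↦ colexSet_mem_Rfam (mem_range.1 hj))
    (fun S hS ↦ mem_range.2 (mem_filter.1 hS).2) (fun j _ ↦ colexVal_colexSet j)
    (fun S hS ↦ colexSet_colexVal fun h0 ↦ ?_) fun j _ ↦ by rw [card_colexSet]).symm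
  simpa using mem_powerset.1 (mem_filter.1 hS).1 h0

end Rfam

/-- Katona's generalization of the Kruskal–Katona theorem: for a monotone
non-increasing `f : ℕ → ℝ` and a hereditary family `𝓕` with `|𝓕| = m`,
`∑_{F ∈ 𝓕} f(|F|) ≥ ∑_{R ∈ R(m)} f(|R|)`. -/
theorem katona_kruskal_katona (n : ℕ) (f : ℕ → ℝ)
    (hf : ∀ i j : ℕ, i ≤ j → f j ≤ f i)
    (𝓕 : Finset (Finset (Fin n)))
    (hered : ∀ A ∈ 𝓕, ∀ B ⊆ A, B ∈ 𝓕) :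
    ∑ R ∈ Rfam 𝓕.card, f R.card ≤ ∑ A ∈ 𝓕, f A.card := by
  rw [sum_card_Rfam]
  exact IsLowerSet.colexSum_card_le_sum_card (fun A B hBA hA ↦ hered A hA B hBA)
    fun i j hij ↦ hf i j hij
end

section
/- (Construction for lower bound) Let d | n with n = dk, let U_1, …, U_k partition [n] into sets of size d, and let F = {∅} ∪ ⋃_i (2^{U_i} \ {∅}). Then |F| = (2^d − 1)/d · n + 1, and for every (n−1)-element set T ⊆ [n], |F|_T| ≤ |F| − 2^{d−1}; hence (n, (2^d − 1)n/d + 1) does not arrow (n−1, (2^d−1)n/d + 1 − (2^{d−1} − 1)). -/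
open Finset

lemma card_biUnion_powerset_aux {α : Type*} [DecidableEq α] {k : ℕ} (hk : 0 < k)
    (V : Fin k → Finset α) (hdisj : ∀ i j : Fin k, i ≠ j → Disjoint (V i) (V j)) :
    ((Finset.univ : Finset (Fin k)).biUnion (fun i => (V i).powerset)).card
      = ∑ i, (2 ^ (V i).card - 1) + 1 := by
  have hdisj' : ∀ i ∈ (univ : Finset (Fin k)), ∀ j ∈ univ, i ≠ j →
      Disjoint ((V i).powerset.erase ∅) ((V j).powerset.erase ∅) := by
    intro i _ j _ hij
    rw [Finset.disjoint_left]
    intro A hA hB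
    simp only [mem_erase, mem_powerset] at hA hB
    exact hA.1 (Finset.subset_empty.mp
      (((Finset.subset_inter hA.2 hB.2).trans (hdisj i j hij).le_bot)))
  have hset : (univ : Finset (Fin k)).biUnion (fun i => (V i).powerset)
      = insert ∅ ((univ : Finset (Fin k)).biUnion (fun i => (V i).powerset.erase ∅)) := by
    ext A
    simp only [mem_biUnion, mem_insert, mem_powerset, mem_erase, mem_univ, true_and]
    constructor
    · rintro ⟨i, hi⟩
      by_cases h : A = ∅
      · exact Or.inl h
      · exact Or.inr ⟨i, h, hi⟩
    · rintro (rfl | ⟨i, _, hi⟩)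
      · exact ⟨⟨0, hk⟩, empty_subset _⟩
      · exact ⟨i, hi⟩
  rw [hset, card_insert_of_notMem (by simp), card_biUnion hdisj']
  congr 1
  apply Finset.sum_congr rfl
  intro i _
  rw [card_erase_of_mem (by simp), card_powerset]

lemma trace_biUnion_powerset {n k : ℕ} (U : Fin k → Finset (Fin n)) (T : Finset (Fin n)) :
    (((univ : Finset (Fin k)).biUnion fun i => (U i).powerset).image (· ∩ T))
      = (univ : Finset (Fin k)).biUnion (fun i => (U i ∩ T).powerset) := by
  ext B
  simp only [mem_image, mem_biUnion, mem_powerset, mem_univ, true_and]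
  constructor
  · rintro ⟨A, ⟨i, hA⟩, rfl⟩
    exact ⟨i, inter_subset_inter hA le_rfl⟩
  · rintro ⟨i, hB⟩
    refine ⟨B, ⟨i, hB.trans inter_subset_left⟩, ?_⟩
    rw [inter_eq_left]
    exact hB.trans inter_subset_right

/-- The lower-bound construction for `m(n, 2^{d-1} - 1)`: if `[n]` is partitioned
into `k` blocks `U i` of size `d` and `𝓕 = {∅} ∪ ⋃ i (2^{U i} \ {∅})`, then
`|𝓕| = (2^d - 1)k + 1` and every trace on an `(n-1)`-set has size at most
`|𝓕| - 2^{d-1}`; hence `(n, (2^d-1)k + 1) ↛ (n-1, (2^d-1)k + 1 - (2^{d-1} - 1))`. -/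
theorem squash_lower_bound_construction (d k n : ℕ) (hd : 0 < d) (hk : 0 < k)
    (hn : n = d * k) (U : Fin k → Finset (Fin n))
    (hUcard : ∀ i, (U i).card = d)
    (hUdisj : ∀ i j, i ≠ j → Disjoint (U i) (U j))
    (hUcover : (Finset.univ : Finset (Fin k)).biUnion U = Finset.univ)
    (𝓕 : Finset (Finset (Fin n)))
    (h𝓕 : 𝓕 = (Finset.univ : Finset (Fin k)).biUnion (fun i => (U i).powerset)) :
    𝓕.card = (2 ^ d - 1) * k + 1 ∧
    (∀ T : Finset (Fin n), T.card = n - 1 →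
      (𝓕.image (· ∩ T)).card ≤ 𝓕.card - 2 ^ (d - 1)) ∧
    (∀ T : Finset (Fin n), T.card = n - 1 →
      (𝓕.image (· ∩ T)).card < (2 ^ d - 1) * k + 1 - (2 ^ (d - 1) - 1)) := by
  have hn1 : 1 ≤ n := by
    rw [hn]; exact Nat.one_le_iff_ne_zero.mpr (by positivity)
  have hp : 1 ≤ 2 ^ (d - 1) := Nat.one_le_two_pow
  have h2d : 2 ^ d = 2 * 2 ^ (d - 1) := by
    conv_lhs => rw [show d = (d - 1) + 1 by omega]
    rw [pow_succ]; ring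
  have hFcard : 𝓕.card = (2 ^ d - 1) * k + 1 := by
    rw [h𝓕, card_biUnion_powerset_aux hk U hUdisj]
    congr 1
    rw [Finset.sum_congr rfl (fun i _ => by rw [hUcard i]), Finset.sum_const,
      card_univ, Fintype.card_fin, smul_eq_mul, mul_comm]
  have key : ∀ T : Finset (Fin n), T.card = n - 1 →
      (𝓕.image (· ∩ T)).card = (2 ^ (d - 1) - 1) + (k - 1) * (2 ^ d - 1) + 1 := by
    intro T hT
    -- find the missing vertex v
    have hsd : ((univ : Finset (Fin n)) \ T).card = 1 := by
      rw [card_sdiff_of_subset (subset_univ T), card_univ, Fintype.card_fin, hT]; omega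
    obtain ⟨v, hv⟩ := Finset.card_eq_one.mp hsd
    have hmemT : ∀ x : Fin n, x ∈ T ↔ x ≠ v := by
      intro x
      constructor
      · intro hx hxv
        have : x ∈ (univ : Finset (Fin n)) \ T := by rw [hv, hxv]; simp
        exact (mem_sdiff.mp this).2 hx
      · intro hx
        by_contra hxT
        have : x ∈ (univ : Finset (Fin n)) \ T := by simp [hxT]
        rw [hv, mem_singleton] at this
        exact hx this
    obtain ⟨i0, _, hvi0⟩ := mem_biUnion.mp (hUcover ▸ mem_univ v)
    have hcardi : ∀ i : Fin k, (U i ∩ T).card = if i = i0 then d - 1 else d := by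
      intro i
      by_cases h : i = i0
      · subst h
        have : U i ∩ T = (U i).erase v := by
          ext x
          simp only [mem_inter, mem_erase, hmemT x]
          tauto
        rw [this, card_erase_of_mem hvi0, hUcard, if_pos rfl]
      · have : U i ∩ T = U i := by
          rw [inter_eq_left]
          intro x hx
          rw [hmemT x]
          rintro rfl
          exact (Finset.disjoint_left.mp (hUdisj i i0 h) hx) hvi0
        rw [this, hUcard, if_neg h]
    rw [h𝓕, trace_biUnion_powerset, card_biUnion_powerset_aux hk _
      (fun i j hij => (hUdisj i j hij).mono inter_subset_left inter_subset_left)]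
    congr 1
    rw [← Finset.add_sum_erase _ _ (mem_univ i0)]
    congr 1
    · rw [hcardi i0, if_pos rfl]
    · rw [Finset.sum_congr rfl (fun i hi => by
        rw [hcardi i, if_neg (Finset.ne_of_mem_erase hi)]),
        Finset.sum_const, smul_eq_mul, card_erase_of_mem (mem_univ i0),
        card_univ, Fintype.card_fin]
  obtain ⟨K, hK⟩ : ∃ K, k = K + 1 := ⟨k - 1, by omega⟩
  obtain ⟨P, hP⟩ : ∃ P, 2 ^ (d - 1) = P + 1 := ⟨2 ^ (d - 1) - 1, by omega⟩
  have e1 : 2 ^ d - 1 = 2 * P + 1 := by omega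
  refine ⟨hFcard, fun T hT => ?_, fun T hT => ?_⟩
  · rw [key T hT, hFcard, hP, hK, e1]
    have e2 : (2 * P + 1) * (K + 1) + 1 - (P + 1) = (K + 1 - 1) * (2 * P + 1) + P + 1 := by
      have : (2 * P + 1) * (K + 1) = (K + 1 - 1) * (2 * P + 1) + (2 * P + 1) := by
        simp; ring
      omega
    rw [e2]
    generalize (K + 1 - 1) * (2 * P + 1) = M
    omega
  · rw [key T hT, hP, hK, e1]
    have e2 : (2 * P + 1) * (K + 1) + 1 - (P + 1 - 1) = (K + 1 - 1) * (2 * P + 1) + P + 2 := by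
      have : (2 * P + 1) * (K + 1) = (K + 1 - 1) * (2 * P + 1) + (2 * P + 1) := by
        simp; ring
      omega
    rw [e2]
    generalize (K + 1 - 1) * (2 * P + 1) = M
    omega
end

section
/- (Volume lower bound for traces, Bollobás–Radcliffe) For any positive integers a ≤ n and any family F ⊆ 2^[n] with 1 ≤ |F| ≤ 2^n, there exists an a-element subset T ⊆ [n] with |F|_T| ≥ |F|^{a/n}. -/
/-!
Let `H(S)` be the entropy of `A ∩ S` for `A` uniform on `𝓕`. It is submodular, `H(∅) = 0`,
`H([n]) = log |𝓕|` and `H(S) ≤ log |𝓕|_S|`. Submodularity gives the chain-rule bound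
`H(S) ≥ ∑_{j ∈ S} (H({x ≤ j}) - H({x < j}))`, and summing it over the `n` cyclic intervals of
length `a`, which cover every point exactly `a` times, gives `∑ H(I) ≥ a log |𝓕|` (Shearer).
Some interval therefore has `H(I) ≥ (a / n) log |𝓕|`.
-/

open Finset Real

section UniformEntropy

variable {ι β γ δ : Type*} [DecidableEq β] [DecidableEq γ] [DecidableEq δ]

def fiberCard (s : Finset ι) (f : ι → β) (b : β) : ℕ := #{i ∈ s | f i = b}

/-- The Shannon entropy of `f X` for `X` uniformly distributed on `s`. -/
noncomputable def uniformEntropy (s : Finset ι) (f : ι → β) : ℝ :=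
  ∑ i ∈ s, log (#s / fiberCard s f (f i)) / #s

variable {s : Finset ι}

lemma fiberCard_pos {f : ι → β} {i : ι} (hi : i ∈ s) : 0 < fiberCard s f (f i) :=
  card_pos.2 ⟨i, mem_filter.2 ⟨hi, rfl⟩⟩

lemma sum_div_fiberCard (f : ι → β) (ψ : β → ℝ) :
    ∑ i ∈ s, ψ (f i) / fiberCard s f (f i) = ∑ b ∈ s.image f, ψ b := by
  rw [← sum_fiberwise_of_maps_to fun i hi => mem_image_of_mem f hi]
  refine sum_congr rfl fun b hb => ?_
  obtain ⟨i, hi, rfl⟩ := mem_image.1 hb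
  have hpos : (0 : ℝ) < fiberCard s f (f i) := by exact_mod_cast fiberCard_pos hi
  rw [sum_congr rfl fun j hj => by rw [(mem_filter.1 hj).2], sum_const, nsmul_eq_mul]
  exact mul_div_cancel₀ _ hpos.ne'

lemma sum_fiberCard_filter_image (g : ι → γ) (ρ : γ → δ) (x : δ) :
    ∑ c ∈ s.image g with ρ c = x, fiberCard s g c = fiberCard s (ρ ∘ g) x := by
  rw [fiberCard, card_eq_sum_card_image g, filter_image]
  refine sum_congr rfl fun c hc => ?_
  obtain ⟨i, hi, rfl⟩ := mem_image.1 hc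
  rw [fiberCard, filter_filter]
  refine congrArg card (filter_congr fun j _ => ?_)
  simp only [Function.comp_apply]
  exact ⟨fun h => ⟨h ▸ (mem_filter.1 hi).2, h⟩, And.right⟩

lemma sum_log_div_card_le_log_sum_div_card {x : ι → ℝ} (hx : ∀ i ∈ s, 0 < x i) :
    ∑ i ∈ s, log (x i) / #s ≤ log (∑ i ∈ s, x i / #s) := by
  rcases s.eq_empty_or_nonempty with rfl | hs
  · simp
  have hcard : (0 : ℝ) < #s := by exact_mod_cast hs.card_pos
  have := strictConcaveOn_log_Ioi.concaveOn.le_map_sum (t := s) (w := fun _ => (#s : ℝ)⁻¹)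
    (p := x) (fun _ _ => by positivity) (by simp [hcard.ne']) hx
  simpa only [smul_eq_mul, inv_mul_eq_div] using this

lemma uniformEntropy_le_log_card_image (f : ι → β) :
    uniformEntropy s f ≤ log #(s.image f) := by
  calc uniformEntropy s f ≤ log (∑ i ∈ s, (#s / fiberCard s f (f i) : ℝ) / #s) :=
        sum_log_div_card_le_log_sum_div_card fun i hi => by
          have := fiberCard_pos (f := f) hi
          have : 0 < #s := card_pos.2 ⟨i, hi⟩
          positivity
    _ = log #(s.image f) := by
        congr 1
        rw [(by simp : (#(s.image f) : ℝ) = ∑ _ ∈ s.image f, 1), ← sum_div_fiberCard f fun _ => 1]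
        refine sum_congr rfl fun i hi => ?_
        have : (#s : ℝ) ≠ 0 := by exact_mod_cast (card_pos.2 ⟨i, hi⟩).ne'
        rw [div_right_comm, div_self this]

lemma uniformEntropy_const (s : Finset ι) (b : β) : uniformEntropy s (fun _ => b) = 0 := by
  refine sum_eq_zero fun i hi => ?_
  have hs : (#s : ℝ) ≠ 0 := by exact_mod_cast (card_pos.2 ⟨i, hi⟩).ne'
  rw [fiberCard, filter_true_of_mem fun _ _ => rfl, div_self hs, log_one, zero_div]

lemma uniformEntropy_of_injOn {f : ι → β} (hf : Set.InjOn f s) :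
    uniformEntropy s f = log #s := by
  have hfiber : ∀ i ∈ s, fiberCard s f (f i) = 1 := fun i hi =>
    card_eq_one.2 ⟨i, eq_singleton_iff_unique_mem.2
      ⟨mem_filter.2 ⟨hi, rfl⟩, fun j hj => hf (mem_filter.1 hj).1 hi (mem_filter.1 hj).2⟩⟩
  rw [uniformEntropy, sum_congr rfl fun i hi => by rw [hfiber i hi], sum_const, nsmul_eq_mul,
    Nat.cast_one, div_one, mul_div_assoc']
  exact mul_div_cancel_left_of_imp fun h => by rw [h, log_zero]

lemma uniformEntropy_congr {f : ι → β} {g : ι → γ}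
    (hfg : ∀ i ∈ s, ∀ j ∈ s, f i = f j ↔ g i = g j) :
    uniformEntropy s f = uniformEntropy s g := by
  refine sum_congr rfl fun i hi => ?_
  rw [fiberCard, fiberCard, filter_congr fun j hj => hfg j hj i hi]

/-- Fibres of `(f, g)` inject into pairs of an `f`-fibre and a `g`-fibre over the same fibre of
`φ ∘ f = χ ∘ g`; summing over the latter gives the bound. -/
lemma sum_fiberCard_mul_div_le_card (f : ι → β) (g : ι → γ) (φ : β → δ) (χ : γ → δ)
    (hfg : ∀ i ∈ s, φ (f i) = χ (g i)) :
    ∑ i ∈ s, (fiberCard s f (f i) * fiberCard s g (g i) / fiberCard s (φ ∘ f) (φ (f i)) : ℝ) /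
      fiberCard s (fun i => (f i, g i)) (f i, g i) ≤ #s := by
  set F : β × γ → ℝ := fun p => fiberCard s f p.1 * fiberCard s g p.2 / fiberCard s (φ ∘ f) (φ p.1)
  have hmarginal : ∀ b, ∑ c ∈ s.image g with χ c = φ b, (fiberCard s g c : ℝ) =
      fiberCard s (φ ∘ f) (φ b) := fun b => by
    rw [← Nat.cast_sum, sum_fiberCard_filter_image]
    exact congrArg (fun n : ℕ => (n : ℝ)) (congrArg card
      (filter_congr fun i hi => by rw [Function.comp_apply, Function.comp_apply, hfg i hi]))
  calc _ = ∑ p ∈ s.image fun i => (f i, g i), F p := sum_div_fiberCard (fun i => (f i, g i)) F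
    _ ≤ ∑ p ∈ s.image f ×ˢ s.image g with χ p.2 = φ p.1, F p := by
        refine sum_le_sum_of_subset_of_nonneg (fun p hp => ?_) fun _ _ _ => by positivity
        obtain ⟨i, hi, rfl⟩ := mem_image.1 hp
        exact mem_filter.2 ⟨mem_product.2 ⟨mem_image_of_mem f hi, mem_image_of_mem g hi⟩,
          (hfg i hi).symm⟩
    _ = ∑ b ∈ s.image f, ∑ c ∈ s.image g with χ c = φ b, F (b, c) :=
        sum_finset_product _ _ _ fun p => by simp only [mem_filter, mem_product, and_assoc]
    _ = ∑ b ∈ s.image f, (fiberCard s f b : ℝ) := by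
        refine sum_congr rfl fun b hb => ?_
        obtain ⟨i, hi, rfl⟩ := mem_image.1 hb
        have hpos : (0 : ℝ) < fiberCard s (φ ∘ f) (φ (f i)) := by
          exact_mod_cast fiberCard_pos (f := φ ∘ f) hi
        simp only [F, mul_div_right_comm _ (fiberCard s g _ : ℝ), ← mul_sum, hmarginal,
          div_mul_cancel₀ _ hpos.ne']
    _ = #s := by exact_mod_cast (card_eq_sum_card_image f s).symm

theorem uniformEntropy_prod_add_comp_le (f : ι → β) (g : ι → γ) (φ : β → δ) (χ : γ → δ)
    (hfg : ∀ i ∈ s, φ (f i) = χ (g i)) :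
    uniformEntropy s (fun i => (f i, g i)) + uniformEntropy s (φ ∘ f) ≤
      uniformEntropy s f + uniformEntropy s g := by
  set x : ι → ℝ := fun i =>
    (fiberCard s f (f i) * fiberCard s g (g i) / fiberCard s (φ ∘ f) (φ (f i)) : ℝ) /
      fiberCard s (fun i => (f i, g i)) (f i, g i)
  have hpos : ∀ i ∈ s, (0 : ℝ) < #s ∧ (0 : ℝ) < fiberCard s f (f i) ∧
      (0 : ℝ) < fiberCard s g (g i) ∧ (0 : ℝ) < fiberCard s (φ ∘ f) (φ (f i)) ∧
      (0 : ℝ) < fiberCard s (fun i => (f i, g i)) (f i, g i) := fun i hi => by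
    refine ⟨?_, ?_, ?_, ?_, ?_⟩ <;> norm_cast
    exacts [card_pos.2 ⟨i, hi⟩, fiberCard_pos hi, fiberCard_pos hi, fiberCard_pos (f := φ ∘ f) hi,
      fiberCard_pos (f := fun i => (f i, g i)) hi]
  have hx : ∀ i ∈ s, 0 < x i := fun i hi => by
    obtain ⟨-, ha, hb, hc, hd⟩ := hpos i hi
    positivity
  have hterm : ∀ i ∈ s, log (#s / fiberCard s (fun i => (f i, g i)) (f i, g i)) / #s +
      log (#s / fiberCard s (φ ∘ f) (φ (f i))) / #s =
      log (#s / fiberCard s f (f i)) / #s + log (#s / fiberCard s g (g i)) / #s +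
        log (x i) / #s := fun i hi => by
    obtain ⟨hN, ha, hb, hc, hd⟩ := hpos i hi
    rw [log_div hN.ne' ha.ne', log_div hN.ne' hb.ne', log_div hN.ne' hc.ne',
      log_div hN.ne' hd.ne', log_div (div_pos (mul_pos ha hb) hc).ne' hd.ne',
      log_div (mul_pos ha hb).ne' hc.ne', log_mul ha.ne' hb.ne']
    ring
  have hsum : ∑ i ∈ s, log (x i) / #s ≤ 0 := by
    refine (sum_log_div_card_le_log_sum_div_card hx).trans (log_nonpos ?_ ?_)
    · exact sum_nonneg fun i hi => (div_pos (hx i hi) (hpos i hi).1).le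
    · rw [← sum_div]
      exact div_le_one_of_le₀ (sum_fiberCard_mul_div_le_card f g φ χ hfg) (Nat.cast_nonneg _)
  have hsplit : uniformEntropy s (fun i => (f i, g i)) + uniformEntropy s (φ ∘ f) =
      uniformEntropy s f + uniformEntropy s g + ∑ i ∈ s, log (x i) / #s := by
    simp only [uniformEntropy, ← sum_add_distrib]
    exact sum_congr rfl hterm
  linarith

end UniformEntropy

section Trace

variable {α : Type*} [DecidableEq α]

noncomputable def traceEntropy (𝓕 : Finset (Finset α)) (S : Finset α) : ℝ :=
  uniformEntropy 𝓕 (· ∩ S)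

lemma traceEntropy_union_add_inter_le (𝓕 : Finset (Finset α)) (S T : Finset α) :
    traceEntropy 𝓕 (S ∪ T) + traceEntropy 𝓕 (S ∩ T) ≤ traceEntropy 𝓕 S + traceEntropy 𝓕 T := by
  have hunion : traceEntropy 𝓕 (S ∪ T) = uniformEntropy 𝓕 fun A => (A ∩ S, A ∩ T) :=
    uniformEntropy_congr fun A _ B _ => by
      simp only [Prod.mk.injEq, Finset.ext_iff, mem_inter, mem_union]
      grind
  have hinter : traceEntropy 𝓕 (S ∩ T) = uniformEntropy 𝓕 ((· ∩ T) ∘ (· ∩ S)) := by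
    simp only [traceEntropy, Function.comp_def, inter_assoc]
  rw [hunion, hinter]
  exact uniformEntropy_prod_add_comp_le (· ∩ S) (· ∩ T) (· ∩ T) (· ∩ S) fun A _ =>
    inter_right_comm A S T

lemma traceEntropy_empty (𝓕 : Finset (Finset α)) : traceEntropy 𝓕 ∅ = 0 := by
  simp only [traceEntropy, inter_empty, uniformEntropy_const]

lemma traceEntropy_univ [Fintype α] (𝓕 : Finset (Finset α)) :
    traceEntropy 𝓕 univ = log #𝓕 :=
  uniformEntropy_of_injOn fun A _ B _ h => by simpa using h

lemma traceEntropy_le_log_card_trace (𝓕 : Finset (Finset α)) (S : Finset α) :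
    traceEntropy 𝓕 S ≤ log #(𝓕.image (· ∩ S)) :=
  uniformEntropy_le_log_card_image _

end Trace

section Submodular

variable {α : Type*} [LinearOrder α] (H : Finset α → ℝ)

lemma sum_filter_le_sub_filter_lt (S : Finset α) :
    ∑ j ∈ S, (H {x ∈ S | x ≤ j} - H {x ∈ S | x < j}) = H S - H ∅ := by
  induction S using Finset.induction_on_max with
  | empty => simp
  | insert a S ha ih =>
    have hlt : ∀ j ∈ S, ¬ a ≤ j := fun j hj => not_le.2 (ha j hj)
    have hS : ∀ j ∈ S, H {x ∈ insert a S | x ≤ j} - H {x ∈ insert a S | x < j} =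
        H {x ∈ S | x ≤ j} - H {x ∈ S | x < j} := fun j hj => by
      rw [filter_insert, filter_insert, if_neg (hlt j hj), if_neg fun h => hlt j hj h.le]
    rw [sum_insert fun h => lt_irrefl a (ha a h), sum_congr rfl hS, ih,
      filter_true_of_mem fun x hx => (mem_insert.1 hx).elim le_of_eq fun h => (ha x h).le,
      filter_insert, if_neg (lt_irrefl a), filter_true_of_mem ha, sub_add_sub_cancel]

variable [Fintype α] {H}

lemma sub_filter_lt_le_of_submodular (hH : ∀ S T, H (S ∪ T) + H (S ∩ T) ≤ H S + H T)
    {S : Finset α} {j : α} (hj : j ∈ S) :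
    H {x | x ≤ j} - H {x | x < j} ≤ H {x ∈ S | x ≤ j} - H {x ∈ S | x < j} := by
  have hunion : {x ∈ S | x ≤ j} ∪ ({x | x < j} : Finset α) = ({x | x ≤ j} : Finset α) := by
    ext x
    simp only [mem_union, mem_filter, mem_univ, true_and]
    constructor
    · rintro (h | h)
      exacts [h.2, h.le]
    · intro h
      rcases h.lt_or_eq with h | rfl
      exacts [Or.inr h, Or.inl ⟨hj, le_rfl⟩]
  have hinter : {x ∈ S | x ≤ j} ∩ ({x | x < j} : Finset α) = {x ∈ S | x < j} := by
    ext x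
    simp only [mem_inter, mem_filter, mem_univ, true_and]
    exact ⟨fun h => ⟨h.1.1, h.2⟩, fun h => ⟨⟨h.1, h.2.le⟩, h.2⟩⟩
  have := hH {x ∈ S | x ≤ j} {x | x < j}
  rw [hunion, hinter] at this
  linarith

theorem mul_sub_le_sum_sub_of_submodular (hH : ∀ S T, H (S ∪ T) + H (S ∩ T) ≤ H S + H T)
    {ι : Type*} (s : Finset ι) (I : ι → Finset α) {k : ℕ} (hI : ∀ j, #{i ∈ s | j ∈ I i} = k) :
    k * (H univ - H ∅) ≤ ∑ i ∈ s, (H (I i) - H ∅) := by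
  set d : α → ℝ := fun j => H {x | x ≤ j} - H {x | x < j}
  calc k * (H univ - H ∅) = ∑ j, ∑ i ∈ s with j ∈ I i, d j := by
        rw [← sum_filter_le_sub_filter_lt H univ, mul_sum]
        simp only [sum_const, hI, nsmul_eq_mul, d]
    _ = ∑ i ∈ s, ∑ j ∈ I i, d j := sum_comm' fun j i => by simp only [mem_filter, mem_univ]; tauto
    _ ≤ ∑ i ∈ s, (H (I i) - H ∅) := sum_le_sum fun i _ =>
        (sum_le_sum fun _ hj => sub_filter_lt_le_of_submodular hH hj).trans
          (sum_filter_le_sub_filter_lt H (I i)).le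

end Submodular

section CyclicInterval

def cyclicInterval {n : ℕ} [NeZero n] (a : ℕ) (i : Fin n) : Finset (Fin n) :=
  {j | ((j - i : Fin n) : ℕ) < a}

variable {n a : ℕ} [NeZero n]

lemma card_cyclicInterval (han : a ≤ n) (i : Fin n) : #(cyclicInterval a i) = a := by
  rw [cyclicInterval, card_equiv (Equiv.subRight i) (t := {k : Fin n | (k : ℕ) < a}) (by simp),
    Fin.card_filter_val_lt, min_eq_right han]

lemma card_filter_mem_cyclicInterval (han : a ≤ n) (j : Fin n) :
    #{i | j ∈ cyclicInterval a i} = a := by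
  rw [card_equiv (Equiv.subLeft j) (t := {k : Fin n | (k : ℕ) < a}) (by simp [cyclicInterval]),
    Fin.card_filter_val_lt, min_eq_right han]

end CyclicInterval

theorem volume_lower_bound_general (n a : ℕ) (ha : 1 ≤ a) (han : a ≤ n)
    (𝓕 : Finset (Finset (Fin n))) (h1 : 1 ≤ 𝓕.card) :
    ∃ T : Finset (Fin n), T.card = a ∧
      (𝓕.card : ℝ) ^ ((a : ℝ) / (n : ℝ)) ≤ ((𝓕.image (· ∩ T)).card : ℝ) := by
  have hn : n ≠ 0 := by omega
  have : NeZero n := ⟨hn⟩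
  have hm : (0 : ℝ) < #𝓕 := by exact_mod_cast h1
  have hshearer :
      ∑ _ : Fin n, (a / n * log #𝓕 : ℝ) ≤ ∑ i, traceEntropy 𝓕 (cyclicInterval a i) := by
    have := mul_sub_le_sum_sub_of_submodular (traceEntropy_union_add_inter_le 𝓕) univ
      (cyclicInterval a) (card_filter_mem_cyclicInterval han)
    simp only [traceEntropy_empty, traceEntropy_univ, sub_zero] at this
    rwa [sum_const, card_univ, Fintype.card_fin, nsmul_eq_mul, ← mul_assoc,
      mul_div_cancel₀ _ (Nat.cast_ne_zero.2 hn)]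
  obtain ⟨i, -, hi⟩ := exists_le_of_sum_le univ_nonempty hshearer
  refine ⟨cyclicInterval a i, card_cyclicInterval han i, ?_⟩
  calc (#𝓕 : ℝ) ^ ((a : ℝ) / n) = exp (a / n * log #𝓕) := by rw [rpow_def_of_pos hm, mul_comm]
    _ ≤ exp (log #(𝓕.image (· ∩ cyclicInterval a i))) :=
        exp_le_exp.2 (hi.trans (traceEntropy_le_log_card_trace 𝓕 _))
    _ = #(𝓕.image (· ∩ cyclicInterval a i)) :=
        exp_log (by exact_mod_cast card_pos.2 ((card_pos.1 h1).image _))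

/-- Bollobás–Radcliffe volume lower bound: any family `𝓕 ⊆ 2^[n]` with
`1 ≤ |𝓕| ≤ 2^n` has an `a`-set whose trace has size at least `|𝓕|^{a/n}`. -/
theorem volume_lower_bound (n a : ℕ) (ha : 1 ≤ a) (han : a ≤ n)
    (𝓕 : Finset (Finset (Fin n))) (h1 : 1 ≤ 𝓕.card) (h2 : 𝓕.card ≤ 2 ^ n) :
    ∃ T : Finset (Fin n), T.card = a ∧
      (𝓕.card : ℝ) ^ ((a : ℝ) / (n : ℝ)) ≤ ((𝓕.image (· ∩ T)).card : ℝ) :=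
  volume_lower_bound_general n a ha han 𝓕 h1
end
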